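/- arXiv:2503.16633 — 5 statements merged into one kernel-verified Lean document; each statement's English description precedes it below -/
import Mathlib

section
/- Uniform power-law bound on the ratio function under the light-traffic assumptions (Lemma on ℱ). Assume σ satisfies L1 and L2. Then there exist constants γ₀ ∈ (0,∞), γ_∞ ∈ (0,1), 𝔠 > 0 and 𝔞 > 0 such that for every x ∈ (0,𝔞] and every t > 0 one has ℱ_x(t) ≤ 𝔠(t^{γ_∞} + t^{γ₀}), and in addition, for every x ∈ (0,𝔞] and every t > 1, ℱ_x(t) ≤ 2𝔠 t^{γ_∞}. -/
/-!
Put `g u = log σ (exp u) - lam * u`. By L1 every increment `g (u + v) - g u` tends to `0` as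
`u → -∞`; since `g` is continuous, a Baire category argument makes this uniform in `v ∈ [0, 1]`,
and chaining unit steps yields Potter's bounds: for `0 < x ≤ y ≤ A`,
`σ y ≤ e^ε (y / x)^(lam + ε) σ x` and `σ x ≤ e^ε (x / y)^(lam - ε) σ y`.
They give the claim for `t ≤ 1` and for `t x ≤ A`. When `t x > A`, L2 and continuity on a compact
interval bound `σ (t x)` by a multiple of `(t x / A)^β`, while Potter's bound for the pair
`x ≤ A` bounds `σ x` below by a multiple of `(x / A)^(lam + ε)`.
-/

open Filter Topology Real Set

def AddSlowlyVaryingAtBot (g : ℝ → ℝ) : Prop :=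
  ∀ v : ℝ, Tendsto (fun u => g (u + v) - g u) atBot (𝓝 0)

namespace AddSlowlyVaryingAtBot

variable {g : ℝ → ℝ} {ε : ℝ}

theorem eventually_abs_sub_le (hg : AddSlowlyVaryingAtBot g) (v : ℝ) (hε : 0 < ε) :
    ∀ᶠ u in atBot, |g (u + v) - g u| ≤ ε :=
  (Metric.tendsto_nhds.1 (hg v) ε hε).mono fun _ hu => by
    simpa only [Real.dist_eq, sub_zero] using hu.le

/-- The Baire category step: the closed sets of increments that are `ε`-small from some point on
cover `ℝ`, so one of them contains an interval. -/
theorem exists_forall_Icc_abs_sub_le (hg : AddSlowlyVaryingAtBot g) (hc : Continuous g)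
    (hε : 0 < ε) :
    ∃ a δ U : ℝ, 0 < δ ∧ ∀ u ≤ U, ∀ v ∈ Icc (a - δ) (a + δ), |g (u + v) - g u| ≤ ε := by
  set E : ℕ → Set ℝ := fun n => ⋂ u ∈ Iic (-(n : ℝ)), {v | |g (u + v) - g u| ≤ ε}
  have hclosed : ∀ n, IsClosed (E n) := fun n =>
    isClosed_biInter fun u _ => isClosed_le (by fun_prop) continuous_const
  have hcover : ⋃ n, E n = univ := by
    refine eq_univ_of_forall fun v => mem_iUnion.2 ?_
    obtain ⟨U, hU⟩ := eventually_atBot.1 (hg.eventually_abs_sub_le v hε)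
    obtain ⟨n, hn⟩ := exists_nat_ge (-U)
    exact ⟨n, mem_iInter₂.2 fun u hu => hU u (by linarith [mem_Iic.1 hu])⟩
  obtain ⟨N, a, ha⟩ := nonempty_interior_of_iUnion_of_closed hclosed hcover
  obtain ⟨δ, hδ, hball⟩ := Metric.nhds_basis_closedBall.mem_iff.1 (isOpen_interior.mem_nhds ha)
  refine ⟨a, δ, -N, hδ, fun u hu v hv => ?_⟩
  rw [← Real.closedBall_eq_Icc] at hv
  exact mem_iInter₂.1 (interior_subset (hball hv)) u hu

theorem exists_forall_Icc_zero_abs_sub_le (hg : AddSlowlyVaryingAtBot g) (hc : Continuous g)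
    (hε : 0 < ε) :
    ∃ δ U : ℝ, 0 < δ ∧ ∀ u ≤ U, ∀ w ∈ Icc 0 δ, |g (u + w) - g u| ≤ ε := by
  obtain ⟨a, δ, U, hδ, hwin⟩ := hg.exists_forall_Icc_abs_sub_le hc (half_pos hε)
  refine ⟨δ, U + (a - δ), hδ, fun u hu w hw => ?_⟩
  have hbase : u - (a - δ) ≤ U := by linarith
  have h₁ := hwin _ hbase (a - δ + w) ⟨by linarith [hw.1], by linarith [hw.2]⟩
  have h₂ := hwin _ hbase (a - δ) ⟨le_rfl, by linarith⟩
  rw [show u - (a - δ) + (a - δ + w) = u + w by ring] at h₁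
  rw [sub_add_cancel] at h₂
  calc |g (u + w) - g u| ≤ |g (u + w) - g (u - (a - δ))| + |g (u - (a - δ)) - g u| :=
        abs_sub_le _ _ _
    _ ≤ ε / 2 + ε / 2 := add_le_add h₁ (by rwa [abs_sub_comm])
    _ = ε := add_halves ε

/-- The uniform convergence theorem: finitely many grid points handle the
coarse part of `v ∈ [0, 1]`, the window near `0` the remainder. -/
theorem exists_forall_Icc_zero_one_abs_sub_le (hg : AddSlowlyVaryingAtBot g) (hc : Continuous g)
    (hε : 0 < ε) :
    ∃ U : ℝ, ∀ u ≤ U, ∀ v ∈ Icc (0 : ℝ) 1, |g (u + v) - g u| ≤ ε := by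
  obtain ⟨δ, U₀, hδ, hwin⟩ := hg.exists_forall_Icc_zero_abs_sub_le hc (half_pos hε)
  have hgrid : ∀ᶠ u in atBot, ∀ i ∈ Finset.range (⌊1 / δ⌋₊ + 1), |g (u + i * δ) - g u| ≤ ε / 2 :=
    (eventually_all_finset _).2 fun i _ => hg.eventually_abs_sub_le _ (half_pos hε)
  obtain ⟨U₁, hU₁⟩ := eventually_atBot.1 hgrid
  refine ⟨min U₁ (U₀ - 1), fun u hu v hv => ?_⟩
  set i := ⌊v / δ⌋₊
  have hi : i ∈ Finset.range (⌊1 / δ⌋₊ + 1) :=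
    Finset.mem_range_succ_iff.2 (Nat.floor_le_floor (div_le_div_of_nonneg_right hv.2 hδ.le))
  have hiv : i * δ ≤ v := (le_div_iff₀ hδ).1 (Nat.floor_le (div_nonneg hv.1 hδ.le))
  have hvi : v < (i + 1) * δ := (div_lt_iff₀ hδ).1 (Nat.lt_floor_add_one _)
  have h₁ := hwin (u + i * δ) (by linarith [min_le_right U₁ (U₀ - 1), hv.2])
    (v - i * δ) ⟨sub_nonneg.2 hiv, by linarith⟩
  have h₂ := hU₁ u (hu.trans (min_le_left _ _)) i hi
  rw [add_add_sub_cancel] at h₁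
  calc |g (u + v) - g u| ≤ |g (u + v) - g (u + i * δ)| + |g (u + i * δ) - g u| :=
        abs_sub_le _ _ _
    _ ≤ ε / 2 + ε / 2 := add_le_add h₁ h₂
    _ = ε := add_halves ε

theorem exists_abs_sub_le_mul_add (hg : AddSlowlyVaryingAtBot g) (hc : Continuous g)
    (hε : 0 < ε) :
    ∃ U : ℝ, ∀ u u', u ≤ u' → u' ≤ U → |g u' - g u| ≤ ε * (u' - u) + ε := by
  obtain ⟨U, hU⟩ := hg.exists_forall_Icc_zero_one_abs_sub_le hc hε
  have hshort : ∀ u u', u ≤ u' → u' ≤ U → u' - u ≤ 1 → |g u' - g u| ≤ ε * (u' - u) + ε := by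
    intro u u' huu' hu' h1
    have h := hU u (by linarith) (u' - u) ⟨sub_nonneg.2 huu', h1⟩
    rw [add_sub_cancel] at h
    linarith [mul_nonneg hε.le (sub_nonneg.2 huu')]
  have hlong : ∀ n : ℕ, ∀ u u', u ≤ u' → u' ≤ U → u' - u ≤ n →
      |g u' - g u| ≤ ε * (u' - u) + ε := by
    intro n
    induction n with
    | zero => exact fun u u' huu' hu' h0 => hshort u u' huu' hu' (by push_cast at h0; linarith)
    | succ n ih =>
      intro u u' huu' hu' hn
      rcases le_or_gt (u' - u) 1 with h1 | h1
      · exact hshort u u' huu' hu' h1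
      have hstep := hU (u' - 1) (by linarith) 1 ⟨zero_le_one, le_rfl⟩
      rw [sub_add_cancel] at hstep
      have hrest := ih u (u' - 1) (by linarith) (by linarith) (by push_cast at hn; linarith)
      calc |g u' - g u| ≤ |g u' - g (u' - 1)| + |g (u' - 1) - g u| := abs_sub_le _ _ _
        _ ≤ ε + (ε * (u' - 1 - u) + ε) := add_le_add hstep hrest
        _ = ε * (u' - u) + ε := by ring
  exact ⟨U, fun u u' huu' hu' => hlong ⌈u' - u⌉₊ u u' huu' hu' (Nat.le_ceil _)⟩

end AddSlowlyVaryingAtBot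

def RegularlyVaryingAtZero (σ : ℝ → ℝ) (lam : ℝ) : Prop :=
  ∀ t > (0 : ℝ), Tendsto (fun x => σ (t * x) / σ x) (𝓝[>] 0) (𝓝 (t ^ lam))

def PotterBounds (σ : ℝ → ℝ) (lam ε A : ℝ) : Prop :=
  ∀ x y, 0 < x → x ≤ y → y ≤ A →
    σ y ≤ exp ε * (y / x) ^ (lam + ε) * σ x ∧ σ x ≤ exp ε * (x / y) ^ (lam - ε) * σ y

namespace RegularlyVaryingAtZero

variable {σ : ℝ → ℝ} {lam : ℝ}

theorem addSlowlyVaryingAtBot (hσ : RegularlyVaryingAtZero σ lam) (hpos : ∀ t > 0, 0 < σ t) :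
    AddSlowlyVaryingAtBot fun u => log (σ (exp u)) - lam * u := by
  intro v
  have h := ((hσ _ (exp_pos v)).comp tendsto_exp_atBot_nhdsGT).log
    (rpow_pos_of_pos (exp_pos v) lam).ne'
  rw [log_rpow (exp_pos v), log_exp] at h
  refine (sub_self (lam * v) ▸ h.sub_const (lam * v)).congr fun u => ?_
  rw [Function.comp_apply, ← exp_add, add_comm v u,
    log_div (hpos _ (exp_pos _)).ne' (hpos _ (exp_pos _)).ne']
  ring

theorem exists_potterBounds (hσ : RegularlyVaryingAtZero σ lam) (hc : ContinuousOn σ (Ioi 0))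
    (hpos : ∀ t > 0, 0 < σ t) {ε : ℝ} (hε : 0 < ε) :
    ∃ A > 0, PotterBounds σ lam ε A := by
  have hcont : Continuous fun u => log (σ (exp u)) - lam * u :=
    ((hc.comp_continuous continuous_exp exp_pos).log fun u => (hpos _ (exp_pos u)).ne').sub
      (continuous_const.mul continuous_id)
  obtain ⟨U, hU⟩ := (hσ.addSlowlyVaryingAtBot hpos).exists_abs_sub_le_mul_add hcont hε
  have hexp : ∀ {a b r : ℝ} (p : ℝ), 0 < a → 0 < b → 0 < r →
      log a ≤ ε + log r * p + log b → a ≤ exp ε * r ^ p * b := fun p ha hb hr h =>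
    calc _ = exp (log _) := (exp_log ha).symm
      _ ≤ exp (ε + log _ * p + log _) := exp_le_exp.2 h
      _ = _ := by rw [exp_add, exp_add, ← rpow_def_of_pos hr, exp_log hb]
  refine ⟨exp U, exp_pos U, fun x y hx hxy hyA => ?_⟩
  have hy := hx.trans_le hxy
  have hlog := abs_le.1 <|
    hU (log x) (log y) (log_le_log hx hxy) ((log_le_log hy hyA).trans_eq (log_exp U))
  simp only [exp_log hx, exp_log hy] at hlog
  have hL : 0 ≤ log y - log x := sub_nonneg.2 (log_le_log hx hxy)
  constructor
  · refine hexp _ (hpos y hy) (hpos x hx) (div_pos hy hx) ?_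
    rw [log_div hy.ne' hx.ne']
    nlinarith
  · refine hexp _ (hpos x hx) (hpos y hy) (div_pos hx hy) ?_
    rw [log_div hx.ne' hy.ne']
    nlinarith

end RegularlyVaryingAtZero

theorem exists_le_mul_div_rpow_of_le_mul_rpow {σ : ℝ → ℝ} {A t₀ β C : ℝ}
    (hc : ContinuousOn σ (Ici A)) (hA : 0 < A) (hβ : 0 ≤ β) (hσ : ∀ t > t₀, σ t ≤ C * t ^ β) :
    ∃ D, 0 ≤ D ∧ ∀ y ≥ A, σ y ≤ D * (y / A) ^ β := by
  obtain ⟨M, hM⟩ :=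
    isCompact_Icc.bddAbove_image (hc.mono (Icc_subset_Ici_self : Icc A t₀ ⊆ Ici A))
  refine ⟨max (max M 0) (C * A ^ β), le_max_of_le_left (le_max_right _ _), fun y hy => ?_⟩
  have hyA : 1 ≤ y / A := (one_le_div hA).2 hy
  rcases le_or_gt y t₀ with hyt | hyt
  · calc σ y ≤ M := hM ⟨y, ⟨hy, hyt⟩, rfl⟩
      _ ≤ max (max M 0) (C * A ^ β) := le_max_of_le_left (le_max_left _ _)
      _ ≤ _ := le_mul_of_one_le_right (le_max_of_le_left (le_max_right _ _))
          (one_le_rpow hyA hβ)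
  · calc σ y ≤ C * y ^ β := hσ y hyt
      _ = C * A ^ β * (y / A) ^ β := by
          rw [div_rpow (by linarith) hA.le, mul_assoc, mul_div_cancel₀ _ (rpow_pos_of_pos hA β).ne']
      _ ≤ _ := mul_le_mul_of_nonneg_right (le_max_right _ _) (by positivity)

namespace PotterBounds

variable {σ : ℝ → ℝ} {lam ε A x t : ℝ}

theorem div_le_of_le_one (h : PotterBounds σ lam ε A) (hpos : ∀ t > 0, 0 < σ t)
    (hx : 0 < x) (hxA : x ≤ A) (ht : 0 < t) (ht1 : t ≤ 1) :
    σ (t * x) / σ x ≤ exp ε * t ^ (lam - ε) := by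
  have htx := (h (t * x) x (by positivity) (mul_le_of_le_one_left hx.le ht1) hxA).2
  rwa [mul_div_cancel_right₀ t hx.ne', ← div_le_iff₀ (hpos x hx)] at htx

theorem div_le_of_one_lt (h : PotterBounds σ lam ε A) (hpos : ∀ t > 0, 0 < σ t) {β γ D : ℝ}
    (hD0 : 0 ≤ D) (hD : ∀ y ≥ A, σ y ≤ D * (y / A) ^ β) (hβγ : β ≤ γ) (hγ : lam + ε ≤ γ)
    (hx : 0 < x) (hxA : x ≤ A) (ht : 1 < t) :
    σ (t * x) / σ x ≤ exp ε * max 1 (D / σ A) * t ^ γ := by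
  have hσx := hpos x hx
  have hA := hx.trans_le hxA
  rw [div_le_iff₀ hσx]
  rcases le_or_gt (t * x) A with htx | htx
  · have hmod := (h x (t * x) hx (le_mul_of_one_le_left hx.le ht.le) htx).1
    rw [mul_div_cancel_right₀ t hx.ne'] at hmod
    calc σ (t * x) ≤ exp ε * 1 * t ^ (lam + ε) * σ x := by rwa [mul_one]
      _ ≤ _ := by gcongr; exacts [le_max_left _ _, ht.le]
  · have hσA := hpos A hA
    have hnum : σ (t * x) ≤ D * (t * x / A) ^ γ :=
      (hD _ htx.le).trans (by gcongr; exact (one_le_div hA).2 htx.le)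
    have hden : σ A ≤ exp ε * (A / x) ^ γ * σ x :=
      (h x A hx hxA le_rfl).1.trans (by gcongr; exact (one_le_div hx).2 hxA)
    have hprod : (t * x / A) ^ γ * (A / x) ^ γ = t ^ γ := by
      rw [← mul_rpow (by positivity) (by positivity)]
      field_simp
    calc σ (t * x) = σ (t * x) * σ A / σ A := by field_simp
      _ ≤ D * (t * x / A) ^ γ * (exp ε * (A / x) ^ γ * σ x) / σ A := by gcongr
      _ = exp ε * (D / σ A) * t ^ γ * σ x := by rw [← hprod]; field_simp
      _ ≤ _ := by gcongr; exact le_max_right _ _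

end PotterBounds

theorem F_uniform_bound_light_general
    (σ : ℝ → ℝ) (hσcont : ContinuousOn σ (Set.Ici 0))
    (hσpos : ∀ t > (0:ℝ), 0 < σ t)
    -- assumption L1
    (lam : ℝ) (hlam : lam ∈ Set.Ioo (0:ℝ) 1)
    (hL1 : ∀ t > (0:ℝ), Tendsto (fun x => σ (t * x) / σ x) (𝓝[>] 0) (𝓝 (t ^ lam)))
    -- assumption L2
    (t₀ β C : ℝ) (hβ : β ∈ Set.Ioo (0:ℝ) 1)
    (hL2 : ∀ t > t₀, σ t ≤ C * t ^ β) :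
    ∃ γ₀ γinf 𝔠 𝔞 : ℝ, 0 < γ₀ ∧ γinf ∈ Set.Ioo (0:ℝ) 1 ∧ 0 < 𝔠 ∧ 0 < 𝔞 ∧
      (∀ x, 0 < x → x ≤ 𝔞 → ∀ t > (0:ℝ),
        σ (t * x) / σ x ≤ 𝔠 * (t ^ γinf + t ^ γ₀)) ∧
      (∀ x, 0 < x → x ≤ 𝔞 → ∀ t > (1:ℝ),
        σ (t * x) / σ x ≤ 2 * 𝔠 * t ^ γinf) := by
  obtain ⟨hlam0, hlam1⟩ := hlam
  obtain ⟨ε, hε, hε₀, hε₁⟩ : ∃ ε : ℝ, 0 < ε ∧ ε < lam ∧ lam + ε < 1 :=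
    ⟨lam * (1 - lam) / 2, by nlinarith, by nlinarith, by nlinarith⟩
  obtain ⟨A, hA, hpot⟩ :=
    RegularlyVaryingAtZero.exists_potterBounds hL1 (hσcont.mono Ioi_subset_Ici_self) hσpos hε
  obtain ⟨D, hD0, hD⟩ := exists_le_mul_div_rpow_of_le_mul_rpow
    (hσcont.mono (Ici_subset_Ici.2 hA.le)) hA hβ.1.le hL2
  set γ := max (lam + ε) β
  set 𝔠 := exp ε * max 1 (D / σ A)
  have h𝔠 : exp ε ≤ 𝔠 := le_mul_of_one_le_right (exp_pos ε).le (le_max_left _ _)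
  have hlarge : ∀ x, 0 < x → x ≤ A → ∀ t > (1:ℝ), σ (t * x) / σ x ≤ 𝔠 * t ^ γ :=
    fun x hx hxA t ht => hpot.div_le_of_one_lt hσpos hD0 hD (le_max_right _ _)
      (le_max_left _ _) hx hxA ht
  refine ⟨lam - ε, γ, 𝔠, A, sub_pos.2 hε₀, ⟨by positivity, max_lt hε₁ hβ.2⟩,
    (exp_pos ε).trans_le h𝔠, hA, fun x hx hxA t ht => ?_, fun x hx hxA t ht => ?_⟩
  · rw [mul_add]
    rcases le_or_gt t 1 with ht1 | ht1
    · have hsmall := hpot.div_le_of_le_one hσpos hx hxA ht ht1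
      have hγ : 0 ≤ 𝔠 * t ^ γ := by positivity
      nlinarith [rpow_pos_of_pos ht (lam - ε)]
    · have hγ₀ : 0 ≤ 𝔠 * t ^ (lam - ε) := by positivity
      linarith [hlarge x hx hxA t ht1]
  · have hγ : 0 ≤ 𝔠 * t ^ γ := by positivity
    linarith [hlarge x hx hxA t ht]

/-- **Uniform power-law bound on `ℱ_x(t) = σ(tx)/σ(x)` under the light-traffic
assumptions L1 and L2.** There are `γ₀ ∈ (0,∞)`, `γ_∞ ∈ (0,1)`, `𝔠 > 0`, `𝔞 > 0` such
that `ℱ_x(t) ≤ 𝔠 (t^{γ_∞} + t^{γ₀})` for all `x ∈ (0,𝔞]`, `t > 0`, and moreover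
`ℱ_x(t) ≤ 2𝔠 t^{γ_∞}` for all `x ∈ (0,𝔞]`, `t > 1`. -/
theorem F_uniform_bound_light
    (σ : ℝ → ℝ) (hσcont : ContinuousOn σ (Set.Ici 0)) (hσ0 : σ 0 = 0)
    (hσpos : ∀ t > (0:ℝ), 0 < σ t)
    -- assumption L1
    (lam : ℝ) (hlam : lam ∈ Set.Ioo (0:ℝ) 1)
    (hL1 : ∀ t > (0:ℝ), Tendsto (fun x => σ (t * x) / σ x) (𝓝[>] 0) (𝓝 (t ^ lam)))
    -- assumption L2
    (t₀ β C : ℝ) (ht₀ : 0 < t₀) (hβ : β ∈ Set.Ioo (0:ℝ) 1) (hC : 0 < C)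
    (hL2 : ∀ t > t₀, σ t ≤ C * t ^ β) :
    ∃ γ₀ γinf 𝔠 𝔞 : ℝ, 0 < γ₀ ∧ γinf ∈ Set.Ioo (0:ℝ) 1 ∧ 0 < 𝔠 ∧ 0 < 𝔞 ∧
      (∀ x, 0 < x → x ≤ 𝔞 → ∀ t > (0:ℝ),
        σ (t * x) / σ x ≤ 𝔠 * (t ^ γinf + t ^ γ₀)) ∧
      (∀ x, 0 < x → x ≤ 𝔞 → ∀ t > (1:ℝ),
        σ (t * x) / σ x ≤ 2 * 𝔠 * t ^ γinf) :=
  F_uniform_bound_light_general σ hσcont hσpos lam hlam hL1 t₀ β C hβ hL2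
end

section
/- Uniform power-law bound on the ratio function under the heavy-traffic assumptions. Assume σ satisfies H1 and H2. Then there exist constants γ₀ ∈ (0,∞), γ_∞ ∈ (0,1), 𝔠 > 0 and 𝔞 > 0 such that for every x ∈ [𝔞,∞) and every t > 0 one has ℱ_x(t) ≤ 𝔠(t^{γ_∞} + t^{γ₀}), and in addition, for every x ∈ [𝔞,∞) and every t > 1, ℱ_x(t) ≤ 2𝔠 t^{γ_∞}. -/
/-!
Put `h = log ∘ σ ∘ exp`. H1 says `h (x + u) - h x → α u` for every `u`; as `h` is continuous,
a Steinhaus-type measure argument makes this uniform in `u ∈ [0, 1]`, and telescoping gives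
`|h y - h x - α (y - x)| ≤ ε (|y - x| + 1)` for all large `x, y`. Exponentiated, this is Potter's
bound `σ (t x) ≤ e^ε max (t^(α+ε), t^(α-ε)) σ x` for `x, t x ≥ X`. When `t x < X`, H2 and
compactness give `σ (t x) ≤ K (t x)^γ₀` with `γ₀ = min β (α - ε)`, and Potter's bound between
`X` and `x` gives `σ X ≤ e^ε (X / x)^γ₀ σ x`; together these bound `σ (t x) / σ x` by a
multiple of `t^γ₀`.
-/

open Filter Topology MeasureTheory Set Real

namespace UniformConvergence

variable {h : ℝ → ℝ} {L δ : ℝ}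

theorem exists_large_measurableSet_uniform (hc : Continuous h)
    (hpt : ∀ u, Tendsto (fun x => h (x + u) - h x) atTop (𝓝 (L * u))) (hδ : 0 < δ) :
    ∃ E ⊆ Icc (0 : ℝ) 2, MeasurableSet E ∧ 3 / 2 < volume E ∧
      ∃ N, ∀ u ∈ E, ∀ x ≥ N, |h (x + u) - h x - L * u| ≤ δ := by
  set E : ℝ → Set ℝ := fun N => Icc 0 2 ∩ {u | ∀ x ≥ N, |h (x + u) - h x - L * u| ≤ δ}
  have hE_closed (N : ℝ) : IsClosed (E N) := by
    refine isClosed_Icc.inter ?_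
    simp only [ofPred_forall]
    exact isClosed_iInter fun x => isClosed_iInter fun _ =>
      isClosed_le (by fun_prop) (by fun_prop)
  have hE_mono : Monotone E := fun N M hNM u hu => ⟨hu.1, fun x hx => hu.2 x (hNM.trans hx)⟩
  have hE_cover : Icc 0 2 ⊆ ⋃ N, E N := by
    intro u hu
    have hev : ∀ᶠ x in atTop, |h (x + u) - h x - L * u| ≤ δ :=
      (hpt u).eventually (Metric.closedBall_mem_nhds _ hδ)
    obtain ⟨N, hN⟩ := eventually_atTop.mp hev
    exact mem_iUnion.mpr ⟨N, hu, hN⟩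
  have hlim : 3 / 2 < volume (⋃ N, E N) := calc
    (3 / 2 : ENNReal) < 2 := by norm_num [ENNReal.div_lt_iff]
    _ = volume (Icc (0 : ℝ) 2) := by simp
    _ ≤ volume (⋃ N, E N) := measure_mono hE_cover
  obtain ⟨N, hN⟩ :=
    ((tendsto_measure_iUnion_atTop hE_mono).eventually (eventually_gt_nhds hlim)).exists
  exact ⟨E N, inter_subset_left, (hE_closed N).measurableSet, hN, N, fun u hu => hu.2⟩

theorem exists_forall_abs_sub_le_of_mem_Icc (hc : Continuous h)
    (hpt : ∀ u, Tendsto (fun x => h (x + u) - h x) atTop (𝓝 (L * u))) (hδ : 0 < δ) :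
    ∃ X, ∀ x ≥ X, ∀ v ∈ Icc (0 : ℝ) 1, |h (x + v) - h x - L * v| ≤ 2 * δ := by
  obtain ⟨E, hE02, hEm, hEvol, N, hN⟩ := exists_large_measurableSet_uniform hc hpt hδ
  refine ⟨N + 2, fun x hx v hv => ?_⟩
  -- `E` and its translate by `v` both lie in `[0, 3]` and have total measure `> 3`.
  obtain ⟨u, huE, huvE⟩ : (E ∩ (fun u => u + -v) ⁻¹' E).Nonempty := by
    refine nonempty_inter_of_measure_lt_add volume (hEm.preimage (measurable_add_const _))
      (u := Icc 0 3) (hE02.trans (Icc_subset_Icc_right (by norm_num))) ?_ ?_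
    · intro w hw
      have := hE02 hw
      constructor <;> linarith [this.1, this.2, hv.1, hv.2]
    · rw [measure_preimage_add_right, Real.volume_Icc]
      calc ENNReal.ofReal (3 - 0) = 3 / 2 + 3 / 2 := by norm_num [ENNReal.ofReal_ofNat]
        _ < volume E + volume E := ENNReal.add_lt_add hEvol hEvol
  have hy : N ≤ x - (u - v) := by linarith [(hE02 huvE).2]
  have e₁ := hN u huE _ hy
  have e₂ := hN _ huvE _ hy
  rw [show x - (u - v) + u = x + v by ring] at e₁
  rw [show x - (u - v) + (u + -v) = x by ring] at e₂
  calc |h (x + v) - h x - L * v|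
      = |(h (x + v) - h (x - (u - v)) - L * u)
          - (h x - h (x - (u - v)) - L * (u + -v))| := by ring_nf
    _ ≤ δ + δ := (abs_sub _ _).trans (add_le_add e₁ e₂)
    _ = 2 * δ := by ring

theorem abs_sub_le_mul_add_one_of_forall_mem_Icc {X : ℝ} (hδ : 0 ≤ δ)
    (hloc : ∀ x ≥ X, ∀ v ∈ Icc (0 : ℝ) 1, |h (x + v) - h x - L * v| ≤ δ) :
    ∀ x ≥ X, ∀ u ≥ 0, |h (x + u) - h x - L * u| ≤ δ * (u + 1) := by
  have hstep : ∀ n : ℕ, ∀ x ≥ X, ∀ u ∈ Icc (0 : ℝ) n, |h (x + u) - h x - L * u| ≤ δ * n := by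
    intro n
    induction n with
    | zero =>
      intro x _ u hu
      obtain rfl : u = 0 := le_antisymm (by simpa using hu.2) hu.1
      simp
    | succ n ih =>
      intro x hx u hu
      set v := min u 1
      have hv : v ∈ Icc (0 : ℝ) 1 := ⟨le_min hu.1 zero_le_one, min_le_right _ _⟩
      have hrest := ih (x + v) (by linarith [hv.1]) (u - v) ⟨by linarith [min_le_left u 1], by
        push_cast at hu
        rcases le_total u 1 with hu1 | hu1
        · simp only [v, min_eq_left hu1, sub_self, Nat.cast_nonneg]
        · simp only [v, min_eq_right hu1]; linarith [hu.2]⟩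
      rw [show x + v + (u - v) = x + u by ring] at hrest
      calc |h (x + u) - h x - L * u|
          = |(h (x + v) - h x - L * v) + (h (x + u) - h (x + v) - L * (u - v))| := by ring_nf
        _ ≤ δ + δ * n := (abs_add_le _ _).trans (add_le_add (hloc x hx v hv) hrest)
        _ = δ * (n + 1 : ℕ) := by push_cast; ring
  intro x hx u hu
  calc |h (x + u) - h x - L * u| ≤ δ * ⌈u⌉₊ := hstep _ x hx u ⟨hu, Nat.le_ceil u⟩
    _ ≤ δ * (u + 1) := mul_le_mul_of_nonneg_left (Nat.ceil_lt_add_one hu).le hδ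

theorem exists_abs_sub_le_of_tendsto_sub (hc : Continuous h)
    (hpt : ∀ u, Tendsto (fun x => h (x + u) - h x) atTop (𝓝 (L * u))) (hδ : 0 < δ) :
    ∃ X, ∀ x ≥ X, ∀ y ≥ X, |h y - h x - L * (y - x)| ≤ δ * (|y - x| + 1) := by
  obtain ⟨X, hX⟩ := exists_forall_abs_sub_le_of_mem_Icc hc hpt (half_pos hδ)
  rw [mul_div_cancel₀ δ two_ne_zero] at hX
  have hglob := abs_sub_le_mul_add_one_of_forall_mem_Icc hδ.le hX
  refine ⟨X, fun x hx y hy => ?_⟩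
  wlog hxy : x ≤ y generalizing x y
  · rw [abs_sub_comm y x, ← abs_neg]
    convert this y hy x hx (le_of_not_ge hxy) using 2
    ring
  simpa [abs_of_nonneg (sub_nonneg.mpr hxy)] using hglob x hx (y - x) (sub_nonneg.mpr hxy)

end UniformConvergence

section RegularVariation

variable {σ : ℝ → ℝ} {α : ℝ}

theorem tendsto_log_comp_exp_add_sub (hσpos : ∀ t > (0 : ℝ), 0 < σ t)
    (hH1 : ∀ t > (0 : ℝ), Tendsto (fun x => σ (t * x) / σ x) atTop (𝓝 (t ^ α))) (u : ℝ) :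
    Tendsto (fun x => log (σ (exp (x + u))) - log (σ (exp x))) atTop (𝓝 (α * u)) := by
  have hlim := ((hH1 _ (exp_pos u)).comp tendsto_exp_atTop).log
    (rpow_pos_of_pos (exp_pos u) α).ne'
  rw [← exp_mul, log_exp, mul_comm] at hlim
  refine hlim.congr fun x => ?_
  simp only [Function.comp_apply, exp_add, mul_comm (exp x)]
  exact log_div (hσpos _ (by positivity)).ne' (hσpos _ (exp_pos x)).ne'

theorem exists_potter_bound (hσcont : ContinuousOn σ (Ioi 0)) (hσpos : ∀ t > (0 : ℝ), 0 < σ t)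
    (hH1 : ∀ t > (0 : ℝ), Tendsto (fun x => σ (t * x) / σ x) atTop (𝓝 (t ^ α)))
    {δ : ℝ} (hδ : 0 < δ) :
    ∃ X > 0, ∀ x ≥ X, ∀ t > 0, X ≤ t * x →
      σ (t * x) ≤ exp δ * max (t ^ (α + δ)) (t ^ (α - δ)) * σ x := by
  have hc : Continuous fun u => log (σ (exp u)) :=
    (hσcont.comp_continuous continuous_exp exp_pos).log fun u => (hσpos _ (exp_pos u)).ne'
  obtain ⟨X₀, hX₀⟩ := UniformConvergence.exists_abs_sub_le_of_tendsto_sub hc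
    (tendsto_log_comp_exp_add_sub hσpos hH1) hδ
  refine ⟨exp X₀, exp_pos _, fun x hx t ht htx => ?_⟩
  have hx0 : 0 < x := (exp_pos _).trans_le hx
  have htx0 : 0 < t * x := by positivity
  have key := hX₀ (log x) ((le_log_iff_exp_le hx0).mpr hx) (log (t * x))
    ((le_log_iff_exp_le htx0).mpr htx)
  rw [exp_log hx0, exp_log htx0, log_mul ht.ne' hx0.ne', add_sub_cancel_right] at key
  have hlog : log (σ (t * x)) ≤ log (σ x) + max (log t * (α + δ)) (log t * (α - δ)) + δ := by
    rcases le_total 0 (log t) with hl | hl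
    · rw [abs_of_nonneg hl] at key
      linarith [(abs_le.mp key).2, le_max_left (log t * (α + δ)) (log t * (α - δ))]
    · rw [abs_of_nonpos hl] at key
      linarith [(abs_le.mp key).2, le_max_right (log t * (α + δ)) (log t * (α - δ))]
  calc σ (t * x) = exp (log (σ (t * x))) := (exp_log (hσpos _ htx0)).symm
    _ ≤ exp (log (σ x) + max (log t * (α + δ)) (log t * (α - δ)) + δ) := exp_le_exp.mpr hlog
    _ = exp δ * max (t ^ (α + δ)) (t ^ (α - δ)) * σ x := by
      rw [exp_add, exp_add, exp_log (hσpos _ hx0), exp_monotone.map_max,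
        ← rpow_def_of_pos ht, ← rpow_def_of_pos ht]
      ring

end RegularVariation

theorem exists_le_mul_rpow_of_le_mul_rpow {σ : ℝ → ℝ} {t₀ β C γ R : ℝ}
    (hσcont : ContinuousOn σ (Icc t₀ R)) (ht₀ : 0 < t₀) (hC : 0 ≤ C) (hγ : 0 ≤ γ) (hγβ : γ ≤ β)
    (hH2 : ∀ t, 0 < t → t < t₀ → σ t ≤ C * t ^ β) :
    ∃ K ≥ 0, ∀ s, 0 < s → s ≤ R → σ s ≤ K * s ^ γ := by
  obtain ⟨M, hM⟩ := isCompact_Icc.exists_bound_of_continuousOn hσcont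
  have ht₀γ : 0 < t₀ ^ γ := rpow_pos_of_pos ht₀ γ
  refine ⟨max (C * t₀ ^ (β - γ)) (M / t₀ ^ γ), le_max_of_le_left (by positivity),
    fun s hs hsR => ?_⟩
  rcases lt_or_ge s t₀ with hst | hst
  · calc σ s ≤ C * t₀ ^ (β - γ) * s ^ γ := by
          refine (hH2 s hs hst).trans ?_
          rw [show s ^ β = s ^ (β - γ) * s ^ γ by rw [← rpow_add hs, sub_add_cancel], ← mul_assoc]
          gcongr
      _ ≤ _ := by gcongr; exact le_max_left _ _
  · have hσM : σ s ≤ M := (le_abs_self _).trans (hM s ⟨hst, hsR⟩)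
    calc σ s ≤ M / t₀ ^ γ * s ^ γ := by
          refine hσM.trans ?_
          rw [div_mul_eq_mul_div, le_div_iff₀ ht₀γ]
          gcongr
          · exact (abs_nonneg _).trans (hM s ⟨hst, hsR⟩)
      _ ≤ _ := by gcongr; exact le_max_right _ _

theorem rpow_le_rpow_add_rpow {t a b c : ℝ} (ht : 0 < t) (hba : b ≤ a) (hac : a ≤ c) :
    t ^ a ≤ t ^ b + t ^ c := by
  rcases le_total t 1 with h | h
  · linarith [rpow_le_rpow_of_exponent_ge ht h hba, rpow_pos_of_pos ht c]
  · linarith [rpow_le_rpow_of_exponent_le h hac, rpow_pos_of_pos ht b]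

theorem le_mul_rpow_add_rpow_of_potter {σ : ℝ → ℝ} {X A K γ a b : ℝ}
    (hσpos : ∀ t > (0 : ℝ), 0 < σ t) (hX : 0 < X) (hA : 0 ≤ A) (hK : 0 ≤ K)
    (hγa : γ ≤ a) (hab : a ≤ b)
    (hpotter : ∀ x ≥ X, ∀ t > 0, X ≤ t * x → σ (t * x) ≤ A * max (t ^ b) (t ^ a) * σ x)
    (hsmall : ∀ s, 0 < s → s ≤ X → σ s ≤ K * s ^ γ) :
    ∀ x ≥ X, ∀ t > 0, σ (t * x) ≤ max A (K * A * X ^ γ / σ X) * (t ^ b + t ^ γ) * σ x := by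
  intro x hx t ht
  have hx0 : 0 < x := hX.trans_le hx
  have hσx : 0 < σ x := hσpos x hx0
  rcases le_or_gt X (t * x) with htx | htx
  · calc σ (t * x) ≤ A * max (t ^ b) (t ^ a) * σ x := hpotter x hx t ht htx
      _ ≤ max A (K * A * X ^ γ / σ X) * (t ^ b + t ^ γ) * σ x := by
        gcongr
        · exact le_max_left _ _
        · exact max_le (le_add_of_nonneg_right (by positivity))
            ((rpow_le_rpow_add_rpow ht hγa hab).trans_eq (add_comm _ _))
  · have hXx : 0 < X / x := div_pos hX hx0
    have hXx1 : X / x ≤ 1 := (div_le_one hx0).mpr hx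
    have hσX : σ X ≤ A * (X / x) ^ γ * σ x := calc
      σ X = σ (X / x * x) := by rw [div_mul_cancel₀ X hx0.ne']
      _ ≤ A * max ((X / x) ^ b) ((X / x) ^ a) * σ x :=
        hpotter x hx _ hXx (div_mul_cancel₀ X hx0.ne').ge
      _ ≤ A * (X / x) ^ γ * σ x := by
        gcongr
        exact max_le (rpow_le_rpow_of_exponent_ge hXx hXx1 (hγa.trans hab))
          (rpow_le_rpow_of_exponent_ge hXx hXx1 hγa)
    calc σ (t * x) ≤ K * (t * x) ^ γ := hsmall _ (by positivity) htx.le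
      _ ≤ K * (t * x) ^ γ * (A * (X / x) ^ γ * σ x / σ X) := by
        refine le_mul_of_one_le_right (by positivity) ?_
        rwa [one_le_div (hσpos X hX)]
      _ = K * A * X ^ γ / σ X * t ^ γ * σ x := by
        rw [mul_rpow ht.le hx0.le, div_rpow hX.le hx0.le]
        field_simp
      _ ≤ max A (K * A * X ^ γ / σ X) * (t ^ b + t ^ γ) * σ x := by
        gcongr
        · exact le_max_right _ _
        · exact le_add_of_nonneg_left (by positivity)

theorem F_uniform_bound_heavy_general
    (σ : ℝ → ℝ) (hσcont : ContinuousOn σ (Set.Ici 0))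
    (hσpos : ∀ t > (0:ℝ), 0 < σ t)
    -- assumption H1
    (α : ℝ) (hα : α ∈ Set.Ioo (0:ℝ) 1)
    (hH1 : ∀ t > (0:ℝ), Tendsto (fun x => σ (t * x) / σ x) atTop (𝓝 (t ^ α)))
    -- assumption H2
    (t₀ β C : ℝ) (ht₀ : 0 < t₀) (hβ : β ∈ Set.Ioc (0:ℝ) 1) (hC : 0 < C)
    (hH2 : ∀ t, 0 < t → t < t₀ → σ t ≤ C * t ^ β) :
    ∃ γ₀ γinf 𝔠 𝔞 : ℝ, 0 < γ₀ ∧ γinf ∈ Set.Ioo (0:ℝ) 1 ∧ 0 < 𝔠 ∧ 0 < 𝔞 ∧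
      (∀ x, 𝔞 ≤ x → ∀ t > (0:ℝ),
        σ (t * x) / σ x ≤ 𝔠 * (t ^ γinf + t ^ γ₀)) ∧
      (∀ x, 𝔞 ≤ x → ∀ t > (1:ℝ),
        σ (t * x) / σ x ≤ 2 * 𝔠 * t ^ γinf) := by
  obtain ⟨hα0, hα1⟩ := hα
  obtain ⟨ε, hε, hεα, hεα1⟩ : ∃ ε > 0, 0 < α - ε ∧ α + ε < 1 :=
    ⟨min α (1 - α) / 2, half_pos (lt_min hα0 (sub_pos.mpr hα1)),
      by linarith [min_le_left α (1 - α)], by linarith [min_le_right α (1 - α)]⟩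
  set γ₀ := min β (α - ε)
  obtain ⟨X, hX, hpotter⟩ := exists_potter_bound (hσcont.mono Ioi_subset_Ici_self) hσpos hH1 hε
  obtain ⟨K, hK, hsmall⟩ := exists_le_mul_rpow_of_le_mul_rpow (R := X)
    (hσcont.mono fun s hs => ht₀.le.trans hs.1) ht₀ hC.le (le_min hβ.1.le hεα.le)
    (min_le_left _ _) hH2
  have hbound := le_mul_rpow_add_rpow_of_potter hσpos hX (exp_pos ε).le hK (min_le_right _ _)
    (by linarith) hpotter hsmall
  set 𝔠 := max (exp ε) (K * exp ε * X ^ γ₀ / σ X)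
  have hF : ∀ x, X ≤ x → ∀ t > (0 : ℝ), σ (t * x) / σ x ≤ 𝔠 * (t ^ (α + ε) + t ^ γ₀) :=
    fun x hx t ht => (div_le_iff₀ (hσpos x (hX.trans_le hx))).mpr (hbound x hx t ht)
  refine ⟨γ₀, α + ε, 𝔠, X, lt_min hβ.1 hεα, ⟨by linarith, hεα1⟩,
    (exp_pos ε).trans_le (le_max_left _ _), hX, hF, fun x hx t ht => ?_⟩
  calc σ (t * x) / σ x ≤ 𝔠 * (t ^ (α + ε) + t ^ γ₀) := hF x hx t (by linarith)
    _ ≤ 𝔠 * (t ^ (α + ε) + t ^ (α + ε)) := by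
      gcongr
      · exact ht.le
      · linarith [min_le_right β (α - ε)]
    _ = 2 * 𝔠 * t ^ (α + ε) := by ring

/-- **Uniform power-law bound on `ℱ_x(t) = σ(tx)/σ(x)` under the heavy-traffic
assumptions H1 and H2.** There are `γ₀ ∈ (0,∞)`, `γ_∞ ∈ (0,1)`, `𝔠 > 0`, `𝔞 > 0` such
that `ℱ_x(t) ≤ 𝔠 (t^{γ_∞} + t^{γ₀})` for all `x ∈ [𝔞,∞)`, `t > 0`, and moreover
`ℱ_x(t) ≤ 2𝔠 t^{γ_∞}` for all `x ∈ [𝔞,∞)`, `t > 1`. -/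
theorem F_uniform_bound_heavy
    (σ : ℝ → ℝ) (hσcont : ContinuousOn σ (Set.Ici 0)) (hσ0 : σ 0 = 0)
    (hσpos : ∀ t > (0:ℝ), 0 < σ t)
    -- assumption H1
    (α : ℝ) (hα : α ∈ Set.Ioo (0:ℝ) 1)
    (hH1 : ∀ t > (0:ℝ), Tendsto (fun x => σ (t * x) / σ x) atTop (𝓝 (t ^ α)))
    -- assumption H2
    (t₀ β C : ℝ) (ht₀ : 0 < t₀) (hβ : β ∈ Set.Ioc (0:ℝ) 1) (hC : 0 < C)
    (hH2 : ∀ t, 0 < t → t < t₀ → σ t ≤ C * t ^ β) :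
    ∃ γ₀ γinf 𝔠 𝔞 : ℝ, 0 < γ₀ ∧ γinf ∈ Set.Ioo (0:ℝ) 1 ∧ 0 < 𝔠 ∧ 0 < 𝔞 ∧
      (∀ x, 𝔞 ≤ x → ∀ t > (0:ℝ),
        σ (t * x) / σ x ≤ 𝔠 * (t ^ γinf + t ^ γ₀)) ∧
      (∀ x, 𝔞 ≤ x → ∀ t > (1:ℝ),
        σ (t * x) / σ x ≤ 2 * 𝔠 * t ^ γinf) :=
  F_uniform_bound_heavy_general σ hσcont hσpos α hα hH1 t₀ β C ht₀ hβ hC hH2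
end

section
/- Negligibility of the far-past supremum for fractional Brownian motion. Let B be a fractional Brownian motion with Hurst parameter λ ∈ (0,1). Then for every C̄ > 0, t ∈ [0,∞) and v ∈ ℝ: lim_{𝒯→∞} ℙ( sup_{−∞<s<−𝒯} ( C̄·(B(t) − B(s)) − (t − s) ) > v ) = 0. -/
open MeasureTheory ProbabilityTheory Filter Topology

noncomputable section

/-- `X` is a real-valued centered Gaussian process (indexed by `ℝ`) with covariance
function `K`, under the measure `P`: every finite linear combination of its values is a
centered Gaussian real random variable with the variance prescribed by `K`. -/
def IsCenteredGaussian1 {Ω : Type*} [MeasurableSpace Ω] (P : Measure Ω)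
    (X : ℝ → Ω → ℝ) (K : ℝ → ℝ → ℝ) : Prop :=
  (∀ t, Measurable (X t)) ∧
  ∀ (k : ℕ) (t : Fin k → ℝ) (c : Fin k → ℝ),
    P.map (fun ω => ∑ a, c a * X (t a) ω)
      = gaussianReal 0 (∑ a, ∑ b, c a * c b * K (t a) (t b)).toNNReal

/-- `B` is a fractional Brownian motion with Hurst parameter `H` under `P`: a centered
Gaussian process with continuous sample paths and covariance
`(|t|^{2H} + |s|^{2H} − |t−s|^{2H})/2`. -/
def IsFBM {Ω : Type*} [MeasurableSpace Ω] (P : Measure Ω)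
    (B : ℝ → Ω → ℝ) (H : ℝ) : Prop :=
  (∀ ω, Continuous fun t => B t ω) ∧
  IsCenteredGaussian1 P B
    (fun t s => (|t| ^ (2 * H) + |s| ^ (2 * H) - |t - s| ^ (2 * H)) / 2)

/-!
Almost surely a fractional Brownian motion with `H < 1` grows sublinearly, `B s = o(s)` as
`s → -∞`; hence `C̄ (B t − B s) − (t − s) → −∞`, and the events `{sup_{s < −𝒯} … > v}` shrink to a
null set. For the growth bound, on `[−(n+1), −n]` the value `B(−(n+1)) − B 0` and the increments
of `B` over dyadic intervals of length `2^{-k}` are centred Gaussians with standard deviations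
`(n+1)^H` and `2^{-kH}`. By Gaussian tail bounds, a union bound and Borel–Cantelli, almost surely
for all large `n` none of them exceeds `(n+1)^{(1-H)/2}` (times `k + 1` at level `k`) standard
deviations, and chaining the dyadic increments gives `|B s − B 0| ≤ K (n+1)^{(1+H)/2}` there.
-/

open Asymptotics Set Real

lemma hasSubgaussianMGF_of_map_eq_gaussianReal {Ω : Type*} [MeasurableSpace Ω] {μ : Measure Ω}
    {X : Ω → ℝ} (hX : AEMeasurable X μ) {v : NNReal} (h : μ.map X = gaussianReal 0 v) :
    HasSubgaussianMGF X v μ := by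
  rw [← HasSubgaussianMGF.id_map_iff hX, h]
  exact ⟨integrable_exp_mul_gaussianReal, fun t => by simp [mgf_id_gaussianReal]⟩

lemma measure_abs_ge_le_of_map_eq_gaussianReal {Ω : Type*} [MeasurableSpace Ω] {μ : Measure Ω}
    [IsFiniteMeasure μ] {X : Ω → ℝ} (hX : AEMeasurable X μ) {v : NNReal}
    (h : μ.map X = gaussianReal 0 v) {ε : ℝ} (hε : 0 ≤ ε) :
    μ {ω | ε ≤ |X ω|} ≤ ENNReal.ofReal (2 * exp (-ε ^ 2 / (2 * v))) := by
  have hsub := hasSubgaussianMGF_of_map_eq_gaussianReal hX h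
  have hunion : {ω | ε ≤ |X ω|} = {ω | ε ≤ X ω} ∪ {ω | ε ≤ (-X) ω} := by
    ext ω; exact le_abs (a := ε) (b := X ω)
  rw [hunion, two_mul, ENNReal.ofReal_add (exp_nonneg _) (exp_nonneg _)]
  refine (measure_union_le _ _).trans (add_le_add ?_ ?_) <;>
    rw [← ofReal_measureReal] <;> apply ENNReal.ofReal_le_ofReal
  · exact hsub.measure_ge_le hε
  · exact hsub.neg.measure_ge_le hε

lemma measure_iUnion_le_ofReal_tsum {Ω ι : Type*} [MeasurableSpace Ω] [Countable ι]
    {μ : Measure Ω} {s : ι → Set Ω} {f : ι → ℝ} (hf : ∀ i, 0 ≤ f i) (hsum : Summable f)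
    (h : ∀ i, μ (s i) ≤ ENNReal.ofReal (f i)) :
    μ (⋃ i, s i) ≤ ENNReal.ofReal (∑' i, f i) :=
  (measure_iUnion_le s).trans <|
    (ENNReal.tsum_le_tsum h).trans (ENNReal.ofReal_tsum_of_nonneg hf hsum).ge

lemma summable_exp_neg_rpow_div {ε b : ℝ} (hε : 0 < ε) (hb : 0 < b) :
    Summable fun n : ℕ => exp (-(n : ℝ) ^ ε / b) := by
  have hpow : Tendsto (fun n : ℕ => (n : ℝ) ^ ε) atTop atTop :=
    (tendsto_rpow_atTop hε).comp tendsto_natCast_atTop_atTop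
  have hsq : (fun n : ℕ => (n : ℝ) ^ 2) =o[atTop] fun n => exp (b⁻¹ * (n : ℝ) ^ ε) := by
    refine ((isLittleO_rpow_exp_pos_mul_atTop (2 / ε) (inv_pos.2 hb)).comp_tendsto
      hpow).congr_left fun n => ?_
    rw [Function.comp_apply, ← rpow_mul (Nat.cast_nonneg _), mul_div_cancel₀ _ hε.ne', rpow_two]
  have hinv := hsq.inv_rev <| (eventually_ne_atTop 0).mono fun n hn h =>
    absurd h (pow_ne_zero _ (Nat.cast_ne_zero.2 hn))
  refine summable_of_isBigO_nat (Real.summable_nat_pow_inv.2 one_lt_two)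
    (hinv.isBigO.congr_left fun n => ?_)
  rw [← exp_neg, neg_div, div_eq_inv_mul]

lemma isLittleO_rpow_id_atTop {β : ℝ} (hβ : β < 1) : (fun x : ℝ => x ^ β) =o[atTop] id := by
  refine (isLittleO_iff_tendsto' ?_).2 ((tendsto_rpow_neg_atTop (sub_pos.2 hβ)).congr' ?_)
  · filter_upwards [eventually_gt_atTop 0] with x hx h
    exact absurd h hx.ne'
  · filter_upwards [eventually_gt_atTop 0] with x hx
    rw [id, ← rpow_sub_one hx.ne', neg_sub]

lemma isLittleO_id_atBot_of_eventually_abs_le_rpow {f : ℝ → ℝ} {K β : ℝ} (hK : 0 ≤ K) (hβ0 : 0 ≤ β)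
    (hβ1 : β < 1)
    (h : ∀ᶠ n : ℕ in atTop, ∀ s ∈ Icc (-((n : ℝ) + 1)) (-n), |f s| ≤ K * ((n : ℝ) + 1) ^ β) :
    f =o[atBot] id := by
  have hbound : ∀ᶠ s in atBot, ‖f s‖ ≤ ‖K * (1 - s) ^ β‖ := by
    obtain ⟨N, hN⟩ := eventually_atTop.1 h
    filter_upwards [eventually_le_atBot (-(N : ℝ))] with s hs
    have hfloor := Nat.floor_le (by linarith [N.cast_nonneg (α := ℝ)] : 0 ≤ -s)
    have hfloor' := Nat.lt_floor_add_one (-s)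
    rw [Real.norm_eq_abs, Real.norm_of_nonneg (mul_nonneg hK (rpow_nonneg (by linarith) _))]
    refine (hN ⌊-s⌋₊ (Nat.le_floor (by linarith)) s ⟨by linarith, by linarith⟩).trans ?_
    exact mul_le_mul_of_nonneg_left (rpow_le_rpow (by positivity) (by linarith) hβ0) hK
  have hshift : Tendsto (fun s : ℝ => 1 - s) atBot atTop :=
    tendsto_atTop_add_const_left _ 1 tendsto_neg_atBot_atTop
  have hlin : (fun s : ℝ => 1 - s) =O[atBot] id :=
    (isLittleO_const_id_atBot (1 : ℝ)).isBigO.sub (isBigO_refl id atBot)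
  exact (IsBigO.of_bound' hbound).trans_isLittleO
    ((((isLittleO_rpow_id_atTop hβ1).comp_tendsto hshift).trans_isBigO hlin).const_mul_left K)

lemma abs_sub_le_sum_of_dyadic_increments {g : ℝ → ℝ} {a : ℝ} {c : ℕ → ℝ} (hc : ∀ k, 0 ≤ c k)
    (hinc : ∀ k j : ℕ, j < 2 ^ k → |g (a + (j + 1) / 2 ^ k) - g (a + j / 2 ^ k)| ≤ c k)
    (k j : ℕ) (hj : j ≤ 2 ^ k) :
    |g (a + j / 2 ^ k) - g a| ≤ ∑ i ∈ Finset.range (k + 1), c i := by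
  induction k generalizing j with
  | zero =>
    obtain rfl | rfl : j = 0 ∨ j = 1 := by omega
    · simpa using hc 0
    · simpa using hinc 0 0 one_pos
  | succ k ih =>
    have hcoarse : ∀ m : ℕ, a + ((2 * m : ℕ) : ℝ) / 2 ^ (k + 1) = a + m / 2 ^ k := by
      intro m; push_cast; field_simp; ring
    obtain ⟨m, rfl | rfl⟩ := Nat.even_or_odd' j
    · rw [hcoarse]
      exact (ih m (by omega)).trans (Finset.sum_le_sum_of_subset_of_nonneg
        (Finset.range_subset_range.2 (by omega)) fun i _ _ => hc i)
    · calc |g (a + ((2 * m + 1 : ℕ) : ℝ) / 2 ^ (k + 1)) - g a|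
          ≤ |g (a + (((2 * m : ℕ) : ℝ) + 1) / 2 ^ (k + 1))
              - g (a + ((2 * m : ℕ) : ℝ) / 2 ^ (k + 1))|
            + |g (a + ((2 * m : ℕ) : ℝ) / 2 ^ (k + 1)) - g a| := by
            push_cast; exact abs_sub_le _ _ _
        _ ≤ c (k + 1) + ∑ i ∈ Finset.range (k + 1), c i := by
            refine add_le_add (hinc _ _ (by omega)) ?_
            rw [hcoarse]; exact ih m (by omega)
        _ = ∑ i ∈ Finset.range (k + 1 + 1), c i := by rw [Finset.sum_range_succ _ (k + 1), add_comm]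

lemma abs_sub_le_tsum_of_dyadic_increments {g : ℝ → ℝ} (hg : Continuous g) {a : ℝ} {c : ℕ → ℝ}
    (hc : ∀ k, 0 ≤ c k) (hsum : Summable c)
    (hinc : ∀ k j : ℕ, j < 2 ^ k → |g (a + (j + 1) / 2 ^ k) - g (a + j / 2 ^ k)| ≤ c k)
    {s : ℝ} (hs : s ∈ Icc a (a + 1)) :
    |g s - g a| ≤ ∑' k, c k := by
  have hsa : 0 ≤ s - a := by linarith [hs.1]
  have hdyadic : Tendsto (fun k : ℕ => a + (⌊(s - a) * 2 ^ k⌋₊ : ℝ) / 2 ^ k) atTop (𝓝 s) := by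
    have := ((tendsto_nat_floor_mul_div_atTop hsa).comp
      (tendsto_pow_atTop_atTop_of_one_lt one_lt_two)).const_add a
    rwa [add_sub_cancel] at this
  refine le_of_tendsto' (((hg.tendsto s).comp hdyadic).sub_const (g a)).abs fun k => ?_
  refine (abs_sub_le_sum_of_dyadic_increments hc hinc k _ (Nat.floor_le_of_le ?_)).trans
    (hsum.sum_le_tsum _ fun i _ => hc i)
  have : s - a ≤ 1 := by linarith [hs.2]
  exact_mod_cast mul_le_of_le_one_left (by positivity) this

def HasDyadicIncrementsBelow (g : ℝ → ℝ) (H a y : ℝ) : Prop :=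
  ∀ k : ℕ, ∀ j : Fin (2 ^ k),
    |g (a + ((j : ℕ) + 1) / 2 ^ k) - g (a + (j : ℕ) / 2 ^ k)| < y * (k + 1) * ((2 : ℝ) ^ k)⁻¹ ^ H

lemma HasDyadicIncrementsBelow.abs_sub_le {g : ℝ → ℝ} {H a y : ℝ}
    (h : HasDyadicIncrementsBelow g H a y) (hg : Continuous g) (hH : 0 < H) (hy : 0 ≤ y)
    {s : ℝ} (hs : s ∈ Icc a (a + 1)) :
    |g s - g a| ≤ y * ∑' k : ℕ, ((k : ℝ) + 1) * ((2 : ℝ) ^ H)⁻¹ ^ k := by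
  set ρ : ℝ := ((2 : ℝ) ^ H)⁻¹
  have hρ0 : 0 ≤ ρ := by positivity
  have hρ1 : ρ < 1 := inv_lt_one_of_one_lt₀ (one_lt_rpow one_lt_two hH)
  have hρpow : ∀ k : ℕ, ((2 : ℝ) ^ k)⁻¹ ^ H = ρ ^ k := fun k => by
    rw [inv_rpow (by positivity), ← rpow_pow_comm zero_le_two, inv_pow]
  have hsum : Summable fun k : ℕ => ((k : ℝ) + 1) * ρ ^ k := by
    refine ((summable_pow_mul_geometric_of_norm_lt_one 1 (by rwa [norm_of_nonneg hρ0])).add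
      (summable_geometric_of_lt_one hρ0 hρ1)).congr fun k => ?_
    simp only [pow_one]; ring
  rw [← tsum_mul_left]
  refine abs_sub_le_tsum_of_dyadic_increments hg (fun k => by positivity) (hsum.mul_left y)
    (fun k j hj => ?_) hs
  simpa only [hρpow, mul_assoc] using (h k ⟨j, hj⟩).le

namespace IsFBM

variable {Ω : Type*} [MeasurableSpace Ω] {P : Measure Ω} {B : ℝ → Ω → ℝ} {H : ℝ}

lemma map_sub (hH : 0 < H) (hB : IsFBM P B H) (u w : ℝ) :
    P.map (fun ω => B u ω - B w ω) = gaussianReal 0 (|u - w| ^ (2 * H)).toNNReal := by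
  have h := hB.2.2 2 ![u, w] ![1, -1]
  simp only [Fin.sum_univ_two, Matrix.cons_val_zero, Matrix.cons_val_one, sub_self, abs_zero,
    zero_rpow (by positivity : 2 * H ≠ 0), abs_sub_comm w u] at h
  convert h using 3
  · ring
  · ring

lemma measure_abs_sub_ge_le [IsFiniteMeasure P] (hH : 0 < H) (hB : IsFBM P B H) {u w y : ℝ}
    (huw : u ≠ w) (hy : 0 ≤ y) :
    P {ω | y * |u - w| ^ H ≤ |B u ω - B w ω|} ≤ ENNReal.ofReal (2 * exp (-y ^ 2 / 2)) := by
  have hd : 0 < |u - w| := abs_pos.2 (sub_ne_zero.2 huw)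
  have hvar : ((|u - w| ^ (2 * H)).toNNReal : ℝ) = (|u - w| ^ H) ^ 2 := by
    rw [Real.coe_toNNReal _ (by positivity), ← rpow_mul_natCast hd.le]; ring_nf
  have htail := measure_abs_ge_le_of_map_eq_gaussianReal
    ((hB.2.1 u).sub (hB.2.1 w)).aemeasurable (hB.map_sub hH u w)
    (by positivity : 0 ≤ y * |u - w| ^ H)
  rwa [hvar, mul_pow, ← neg_mul, mul_div_mul_right _ _ (by positivity)] at htail

lemma measure_not_hasDyadicIncrementsBelow_le [IsFiniteMeasure P] (hH : 0 < H)
    (hB : IsFBM P B H) (a : ℝ) {y : ℝ} (hy : 1 ≤ y) :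
    P {ω | ¬ HasDyadicIncrementsBelow (fun s => B s ω) H a y}
      ≤ ENNReal.ofReal (2 * (∑' k : ℕ, (2 * exp (-1)) ^ k) * exp (-y ^ 2 / 2)) := by
  have hq : 2 * exp (-1) < 1 := by
    have := add_one_lt_exp one_ne_zero
    rw [exp_neg, ← div_eq_mul_inv, div_lt_one (exp_pos 1)]
    linarith
  simp only [HasDyadicIncrementsBelow, not_forall, not_lt, ofPred_exists]
  rw [← tsum_mul_left, ← tsum_mul_right]
  refine measure_iUnion_le_ofReal_tsum (fun k => by positivity)
    ((summable_geometric_of_lt_one (by positivity) hq).mul_left _ |>.mul_right _) fun k => ?_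
  calc P (⋃ j : Fin (2 ^ k), _)
      ≤ ENNReal.ofReal (∑' _ : Fin (2 ^ k), 2 * exp (-(y * (k + 1)) ^ 2 / 2)) := by
        refine measure_iUnion_le_ofReal_tsum (fun _ => by positivity)
          (summable_of_hasFiniteSupport (Set.toFinite _)) fun j => ?_
        have hmesh : |a + ((j : ℕ) + 1) / 2 ^ k - (a + (j : ℕ) / 2 ^ k)| = ((2 : ℝ) ^ k)⁻¹ := by
          rw [abs_eq_self.2 (by field_simp; ring_nf; positivity)]
          field_simp
          ring
        have := hB.measure_abs_sub_ge_le hH (y := y * (k + 1))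
          (u := a + ((j : ℕ) + 1) / 2 ^ k) (w := a + (j : ℕ) / 2 ^ k)
          (sub_ne_zero.1 (abs_pos.1 (hmesh ▸ by positivity))) (by positivity)
        rwa [hmesh] at this
    _ ≤ ENNReal.ofReal (2 * (2 * exp (-1)) ^ k * exp (-y ^ 2 / 2)) := by
        refine ENNReal.ofReal_le_ofReal ?_
        have hexp : exp (-(y * (k + 1)) ^ 2 / 2) ≤ exp (-y ^ 2 / 2) * exp (-1) ^ k := by
          rw [← exp_nat_mul, ← exp_add]
          have hy2 : 0 ≤ (y ^ 2 - 1) * ((k : ℝ) ^ 2 + 2 * k) :=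
            mul_nonneg (by nlinarith) (by positivity)
          exact exp_le_exp.2 (by nlinarith)
        rw [tsum_fintype, Finset.sum_const, Finset.card_univ, Fintype.card_fin, nsmul_eq_mul]
        push_cast
        calc (2 : ℝ) ^ k * (2 * exp (-(y * (k + 1)) ^ 2 / 2))
            ≤ 2 ^ k * (2 * (exp (-y ^ 2 / 2) * exp (-1) ^ k)) := by gcongr
          _ = 2 * (2 * exp (-1)) ^ k * exp (-y ^ 2 / 2) := by ring

lemma ae_eventually_hasDyadicIncrementsBelow [IsFiniteMeasure P] (hH : H ∈ Ioo 0 1)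
    (hB : IsFBM P B H) :
    ∀ᵐ ω ∂P, ∀ᶠ n : ℕ in atTop,
      |B (-((n : ℝ) + 1)) ω - B 0 ω| < ((n : ℝ) + 1) ^ ((1 - H) / 2) * ((n : ℝ) + 1) ^ H ∧
      HasDyadicIncrementsBelow (fun s => B s ω) H (-((n : ℝ) + 1))
        (((n : ℝ) + 1) ^ ((1 - H) / 2)) := by
  obtain ⟨hH0, hH1⟩ := hH
  -- with this exponent the tail bounds `exp (-(n + 1) ^ (1 - H) / 2)` are summable in `n`, while
  -- `y n * (n + 1) ^ H = (n + 1) ^ ((1 + H) / 2)` is still sublinear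
  set y : ℕ → ℝ := fun n => ((n : ℝ) + 1) ^ ((1 - H) / 2)
  have hy1 : ∀ n, 1 ≤ y n := fun n => one_le_rpow (by linarith [n.cast_nonneg (α := ℝ)])
    (by linarith)
  have hy2 : ∀ n, y n ^ 2 = ((n : ℝ) + 1) ^ (1 - H) := fun n => by
    rw [← rpow_mul_natCast (by positivity)]; ring_nf
  set C := 2 * ∑' k : ℕ, (2 * exp (-1)) ^ k
  set bad : ℕ → Set Ω := fun n =>
    {ω | y n * ((n : ℝ) + 1) ^ H ≤ |B (-((n : ℝ) + 1)) ω - B 0 ω|} ∪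
    {ω | ¬ HasDyadicIncrementsBelow (fun s => B s ω) H (-((n : ℝ) + 1)) (y n)}
  have hbad : ∀ n, P (bad n) ≤ ENNReal.ofReal ((2 + C) * exp (-((n : ℝ) + 1) ^ (1 - H) / 2)) := by
    intro n
    have hend := hB.measure_abs_sub_ge_le hH0 (u := -((n : ℝ) + 1)) (w := 0) (y := y n)
      (by linarith [n.cast_nonneg (α := ℝ)]) (by linarith [hy1 n])
    rw [sub_zero, abs_neg, abs_of_pos (by positivity)] at hend
    refine (measure_union_le _ _).trans ?_
    rw [add_mul, ENNReal.ofReal_add (by positivity) (by positivity), ← hy2]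
    exact add_le_add hend (hB.measure_not_hasDyadicIncrementsBelow_le hH0 _ (hy1 n))
  have hsum : ∑' n, P (bad n) ≠ ⊤ := by
    have h := ((summable_nat_add_iff 1).2
      (summable_exp_neg_rpow_div (sub_pos.2 hH1) two_pos)).mul_left (2 + C)
    push_cast at h
    exact ne_top_of_le_ne_top ENNReal.ofReal_ne_top <| (ENNReal.tsum_le_tsum hbad).trans
      (ENNReal.ofReal_tsum_of_nonneg (fun n => by positivity) h).ge
  filter_upwards [ae_eventually_notMem hsum] with ω hω
  filter_upwards [hω] with n hn
  simpa only [bad, mem_union, mem_ofPred_eq, not_or, not_le, not_not] using hn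

lemma ae_eventually_abs_sub_le [IsFiniteMeasure P] (hH : H ∈ Ioo 0 1) (hB : IsFBM P B H) :
    ∃ K, 0 ≤ K ∧ ∀ᵐ ω ∂P, ∀ᶠ n : ℕ in atTop,
      ∀ s ∈ Icc (-((n : ℝ) + 1)) (-n), |B s ω - B 0 ω| ≤ K * ((n : ℝ) + 1) ^ ((1 + H) / 2) := by
  set S := ∑' k : ℕ, ((k : ℝ) + 1) * ((2 : ℝ) ^ H)⁻¹ ^ k
  refine ⟨S + 1, by positivity, ?_⟩
  filter_upwards [hB.ae_eventually_hasDyadicIncrementsBelow hH] with ω hω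
  filter_upwards [hω] with n ⟨hend, hdyadic⟩ s hs
  set x : ℝ := (n : ℝ) + 1
  have hx : 1 ≤ x := by linarith [n.cast_nonneg (α := ℝ)]
  have hchain := hdyadic.abs_sub_le (hB.1 ω) hH.1 (by positivity)
    (by rwa [show -x + 1 = -n by ring])
  have hscale : x ^ ((1 - H) / 2) * x ^ H = x ^ ((1 + H) / 2) := by
    rw [← rpow_add (by positivity)]; ring_nf
  calc |B s ω - B 0 ω|
      ≤ |B s ω - B (-x) ω| + |B (-x) ω - B 0 ω| := abs_sub_le _ _ _
    _ ≤ x ^ ((1 - H) / 2) * S + x ^ ((1 - H) / 2) * x ^ H := add_le_add hchain hend.le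
    _ ≤ x ^ ((1 - H) / 2) * (x ^ H * S) + x ^ ((1 - H) / 2) * x ^ H := by
        gcongr
        exact le_mul_of_one_le_left (by positivity) (one_le_rpow hx hH.1.le)
    _ = (S + 1) * x ^ ((1 + H) / 2) := by rw [← hscale]; ring

lemma ae_isLittleO_id_atBot [IsFiniteMeasure P] (hH : H ∈ Ioo 0 1) (hB : IsFBM P B H) :
    ∀ᵐ ω ∂P, (fun s => B s ω) =o[atBot] id := by
  obtain ⟨K, hK, h⟩ := hB.ae_eventually_abs_sub_le hH
  filter_upwards [h] with ω hω
  have := isLittleO_id_atBot_of_eventually_abs_le_rpow hK (by linarith [hH.1])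
    (by linarith [hH.2]) hω
  simpa using this.add (isLittleO_const_id_atBot (B 0 ω))

end IsFBM

lemma tendsto_measure_lt_iSup_Iio_atTop {Ω : Type*} [MeasurableSpace Ω] {P : Measure Ω}
    [IsFiniteMeasure P] {Y : ℝ → Ω → ℝ} (hmeas : ∀ s, Measurable (Y s))
    (hcont : ∀ ω, Continuous fun s => Y s ω) (hY : ∀ᵐ ω ∂P, Tendsto (fun s => Y s ω) atBot atBot)
    (v : ℝ) :
    Tendsto (fun T : ℝ => P {ω | v < ⨆ s : Iio (-T), Y s ω}) atTop (𝓝 0) := by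
  set A : ℝ → Set Ω := fun T => {ω | ∃ s < -T, v < Y s ω}
  have hA_eq : ∀ T, A T = ⋃ q : ℚ, ⋃ (_ : (q : ℝ) < -T), {ω | v < Y q ω} := by
    intro T
    ext ω
    simp only [A, mem_ofPred_eq, mem_iUnion, exists_prop]
    constructor
    · rintro ⟨s, hs⟩
      obtain ⟨q, hq⟩ := Rat.denseRange_cast.exists_mem_open
        (isOpen_Iio.inter (isOpen_lt continuous_const (hcont ω))) ⟨s, hs⟩
      exact ⟨q, hq⟩
    · rintro ⟨q, hq⟩
      exact ⟨q, hq⟩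
  have hA_meas : ∀ T, MeasurableSet (A T) := fun T => by
    rw [hA_eq]
    exact .iUnion fun q => .iUnion fun _ => measurableSet_lt measurable_const (hmeas q)
  have hA_anti : Antitone A := fun T T' hTT' ω ⟨s, hs, hv⟩ =>
    ⟨s, hs.trans_le (neg_le_neg hTT'), hv⟩
  have hA_null : P (⋂ T, A T) = 0 := by
    refine measure_mono_null ?_ (ae_iff.1 hY)
    intro ω hω hlim
    obtain ⟨T, hT⟩ := eventually_atBot.1 (hlim.eventually_le_atBot v)
    obtain ⟨s, hs, hv⟩ := mem_iInter.1 hω (-T)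
    exact absurd hv (not_lt.2 (hT s (by linarith)))
  have hlim := tendsto_measure_iInter_atTop (fun T => (hA_meas T).nullMeasurableSet) hA_anti
    ⟨0, measure_ne_top P _⟩
  rw [hA_null] at hlim
  refine tendsto_of_tendsto_of_tendsto_of_le_of_le tendsto_const_nhds hlim (fun _ => zero_le)
    fun T => measure_mono fun ω hω => ?_
  have : Nonempty (Iio (-T)) := nonempty_Iio.to_subtype
  obtain ⟨s, hs⟩ := exists_lt_of_lt_ciSup (show v < ⨆ s : Iio (-T), Y s ω from hω)
  exact ⟨s, s.2, hs⟩

theorem fbm_sup_tail_general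
    {Ω : Type*} [MeasurableSpace Ω] (P : Measure Ω) [IsProbabilityMeasure P]
    (lam : ℝ) (hlam : lam ∈ Set.Ioo (0:ℝ) 1)
    (B : ℝ → Ω → ℝ) (hB : IsFBM P B lam)
    (Cbar : ℝ) (t : ℝ) (v : ℝ) :
    Tendsto (fun 𝒯 : ℝ =>
        (P {ω | v < ⨆ s : Set.Iio (-𝒯),
            (Cbar * (B t ω - B (↑s) ω) - (t - ↑s))}).toReal)
      atTop (𝓝 0) := by
  have hlinear : ∀ᵐ ω ∂P, Tendsto (fun s => Cbar * (B t ω - B s ω) - (t - s)) atBot atBot := by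
    filter_upwards [hB.ae_isLittleO_id_atBot hlam] with ω hω
    have hsmall : (fun s => (Cbar * B t ω - t) - Cbar * B s ω) =o[atBot] id :=
      (isLittleO_const_id_atBot _).sub (hω.const_mul_left Cbar)
    refine IsEquivalent.tendsto_atBot (IsEquivalent.symm ?_) tendsto_id
    refine ((IsEquivalent.refl (u := id)).add_isLittleO hsmall).congr_left
      (Eventually.of_forall fun s => ?_)
    simp only [Pi.add_apply, id]
    ring
  have hcont : ∀ ω, Continuous fun s => Cbar * (B t ω - B s ω) - (t - s) := fun ω => by
    have := hB.1 ω
    fun_prop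
  have h := tendsto_measure_lt_iSup_Iio_atTop
    (fun s => (((hB.2.1 t).sub (hB.2.1 s)).const_mul Cbar).sub_const _) hcont hlinear v
  rw [← ENNReal.toReal_zero]
  exact (ENNReal.tendsto_toReal ENNReal.zero_ne_top).comp h

/-- **Negligibility of the far-past supremum for fractional Brownian motion.** For a
fractional Brownian motion `B` with Hurst parameter `λ ∈ (0,1)` and every `C̄ > 0`,
`t ≥ 0`, `v ∈ ℝ`:
`ℙ( sup_{−∞<s<−𝒯} ( C̄ (B(t) − B(s)) − (t − s) ) > v ) → 0` as `𝒯 → ∞`. -/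
theorem fbm_sup_tail
    {Ω : Type*} [MeasurableSpace Ω] (P : Measure Ω) [IsProbabilityMeasure P]
    (lam : ℝ) (hlam : lam ∈ Set.Ioo (0:ℝ) 1)
    (B : ℝ → Ω → ℝ) (hB : IsFBM P B lam)
    (Cbar : ℝ) (hCbar : 0 < Cbar) (t : ℝ) (ht : 0 ≤ t) (v : ℝ) :
    Tendsto (fun 𝒯 : ℝ =>
        (P {ω | v < ⨆ s : Set.Iio (-𝒯),
            (Cbar * (B t ω - B (↑s) ω) - (t - ↑s))}).toReal)
      atTop (𝓝 0) :=
  fbm_sup_tail_general P lam hlam B hB Cbar t v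
end
end

section
/- Covariance limit in the light-traffic regime, positive rate-ratio case. Assume σ satisfies L1 with index λ ∈ (0,1); set κ := (1−λ)⁻¹. Let δ : (x₀,∞) → (0,∞) be regularly varying at ∞ with index −κ, satisfy x δ(x) = σ(δ(x)) for all x > x₀, and δ(x) → 0 as x → ∞. Let r_i, r_j : (0,∞) → (0,∞) satisfy r_i(u) → ∞, r_j(u) → ∞ and r_j(u)/r_i(u) → 𝔯 ∈ (0,1] as u → ∞. Then for all t, s ∈ ℝ \ {0}: lim_{u→∞} [ σ²(δ(r_i(u))|t|) + σ²(δ(r_j(u))|s|) − σ²(|δ(r_i(u))t − δ(r_j(u))s|) ] / ( 2 σ(δ(r_i(u))) σ(δ(r_j(u))) ) = ( |t|^{2λ} + |𝔯^{−κ}s|^{2λ} − |t − 𝔯^{−κ}s|^{2λ} ) / ( 2 𝔯^{−κλ} ). -/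
/-!
In logarithmic coordinates, L1 says that `F v = log σ(e^{-v}) + λ v` has increments
`F (v + w) - F v → 0` for every fixed `w`. Since `F` is continuous, Karamata's uniform
convergence theorem (via Egorov's theorem) makes this uniform for bounded `w`, and chaining
unit steps gives the Potter-type bound `|F v' - F v| ≤ ε (|v' - v| + 1)`. Consequently
`σ (x c) / σ x → C ^ λ` whenever `x → 0⁺` and `c → C ≥ 0`.

The equation `r δ(r) = σ(δ(r))` gives `σ(δ(r_j)) / σ(δ(r_i)) = (r_j / r_i) (δ(r_j) / δ(r_i))`;
in logarithmic coordinates, together with the Potter bound, this forces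
`δ(r_j) / δ(r_i) → 𝔯^{-κ}`.
The covariance quotient is an algebraic combination of four ratios `σ(δ(r_i) c) / σ(δ(r_i))`
with `c` tending to `|t|`, `𝔯^{-κ} |s|`, `|t - 𝔯^{-κ} s|` and `𝔯^{-κ}`.
-/

open Filter Topology MeasureTheory Set

section AdditiveSlowVariation

variable {f : ℝ → ℝ}

lemma exists_volume_le_eventually_abs_sub_lt (hf : Continuous f)
    (h : ∀ w, Tendsto (fun v => f (v + w) - f v) atTop (𝓝 0))
    {v : ℕ → ℝ} (hv : Tendsto v atTop atTop) (R : ℝ) {ε η : ℝ} (hε : 0 < ε) (hη : 0 < η) :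
    ∃ A : Set ℝ, volume A ≤ ENNReal.ofReal η ∧
      ∀ᶠ n in atTop, ∀ x ∈ Icc (-R) R \ A, |f (v n + x) - f (v n)| < ε := by
  obtain ⟨A, -, -, hA, hunif⟩ := tendstoUniformlyOn_of_ae_tendsto (μ := volume)
    (f := fun n x => f (v n + x) - f (v n)) (g := fun _ => 0)
    (fun n => ((hf.comp (continuous_const.add continuous_id)).sub
      continuous_const).stronglyMeasurable)
    stronglyMeasurable_const measurableSet_Icc (by simp)
    (ae_of_all _ fun x _ => (h x).comp hv) hη
  refine ⟨A, hA, ?_⟩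
  filter_upwards [Metric.tendstoUniformlyOn_iff.mp hunif ε hε] with n hn x hx
  simpa [Real.dist_eq, abs_sub_comm] using hn x hx

lemma exists_mem_notMem_add_notMem_of_volume_lt {S A B : Set ℝ} (c : ℝ)
    (h : volume A + volume B < volume S) : ∃ x ∈ S, x ∉ B ∧ c + x ∉ A := by
  by_contra! hS
  have hsub : S ⊆ (c + ·) ⁻¹' A ∪ B := fun x hx => or_iff_not_imp_right.mpr (hS x hx)
  refine (measure_mono (μ := volume) hsub).not_gt ?_
  calc volume ((c + ·) ⁻¹' A ∪ B) ≤ volume A + volume B := by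
        simpa only [measure_preimage_add] using measure_union_le (μ := volume) ((c + ·) ⁻¹' A) B
    _ < volume S := h

/-- The uniform convergence theorem of Karamata, in additive form. -/
theorem exists_forall_abs_sub_le_of_tendsto_sub (hf : Continuous f)
    (h : ∀ w, Tendsto (fun v => f (v + w) - f v) atTop (𝓝 0)) {ε Λ : ℝ}
    (hε : 0 < ε) (hΛ : 0 < Λ) :
    ∃ V, ∀ v ≥ V, ∀ w, |w| ≤ Λ → |f (v + w) - f v| ≤ ε := by
  by_contra! hc
  choose v hv w hw hvw using fun n : ℕ => hc n
  have hv_top : Tendsto v atTop atTop := tendsto_atTop_mono hv tendsto_natCast_atTop_atTop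
  have hvw_top : Tendsto (fun n => v n + w n) atTop atTop :=
    tendsto_atTop_mono (fun n => by linarith [(abs_le.mp (hw n)).1])
      (tendsto_atTop_add_const_right _ (-Λ) hv_top)
  have hΛ4 : 0 < Λ / 4 := by positivity
  obtain ⟨A, hA, hAn⟩ :=
    exists_volume_le_eventually_abs_sub_lt hf h hv_top (2 * Λ) (half_pos hε) hΛ4
  obtain ⟨B, hB, hBn⟩ :=
    exists_volume_le_eventually_abs_sub_lt hf h hvw_top (2 * Λ) (half_pos hε) hΛ4
  obtain ⟨n, hAn, hBn⟩ := (hAn.and hBn).exists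
  have hvol : volume A + volume B < volume (Icc 0 Λ) := by
    rw [Real.volume_Icc, sub_zero]
    refine (add_le_add hA hB).trans_lt ?_
    rw [← ENNReal.ofReal_add (by positivity) (by positivity),
      ENNReal.ofReal_lt_ofReal_iff hΛ]
    linarith
  -- `x` is good both for `v n` (at `w n + x`) and for `v n + w n` (at `x`); this bridges `w n`.
  obtain ⟨x, ⟨hx0, hxΛ⟩, hxB, hxA⟩ := exists_mem_notMem_add_notMem_of_volume_lt (w n) hvol
  have hwn := abs_le.mp (hw n)
  have h₁ := hAn (w n + x) ⟨⟨by linarith, by linarith⟩, hxA⟩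
  have h₂ := hBn x ⟨⟨by linarith, by linarith⟩, hxB⟩
  refine (hvw n).not_ge (le_of_lt ?_)
  calc |f (v n + w n) - f (v n)|
      = |(f (v n + (w n + x)) - f (v n)) - (f (v n + w n + x) - f (v n + w n))| := by
        ring_nf
    _ ≤ |f (v n + (w n + x)) - f (v n)| + |f (v n + w n + x) - f (v n + w n)| := abs_sub _ _
    _ < ε / 2 + ε / 2 := add_lt_add h₁ h₂
    _ = ε := add_halves ε

lemma abs_sub_le_mul_abs_sub_add_one {V ε : ℝ}
    (h : ∀ v ≥ V, ∀ w, |w| ≤ 1 → |f (v + w) - f v| ≤ ε) {v v' : ℝ} (hv : V ≤ v) (hv' : V ≤ v') :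
    |f v' - f v| ≤ ε * (|v' - v| + 1) := by
  have hε : 0 ≤ ε := by simpa using h V le_rfl 0 (by simp)
  have hstep : ∀ n : ℕ, ∀ v ≥ V, ∀ w : ℝ, 0 ≤ w → w ≤ n + 1 →
      |f (v + w) - f v| ≤ ε * (n + 1) := by
    intro n
    induction n with
    | zero =>
      intro v hv w hw₀ hw₁
      simpa using h v hv w (abs_le.mpr ⟨by linarith, by simpa using hw₁⟩)
    | succ n ih =>
      intro v hv w hw₀ hw₁
      rcases le_or_gt w (n + 1) with hw | hw
      · exact (ih v hv w hw₀ hw).trans (by push_cast; nlinarith)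
      · have h₁ := ih v hv (w - 1) (by linarith [n.cast_nonneg (α := ℝ)])
          (by push_cast at hw₁; linarith)
        have h₂ := h (v + (w - 1)) (by linarith) 1 (by simp)
        calc |f (v + w) - f v|
            = |(f (v + (w - 1) + 1) - f (v + (w - 1))) + (f (v + (w - 1)) - f v)| := by ring_nf
          _ ≤ ε + ε * (n + 1) := (abs_add_le _ _).trans (add_le_add h₂ h₁)
          _ = ε * ((n + 1 : ℕ) + 1) := by push_cast; ring
  wlog hle : v ≤ v' generalizing v v'
  · rw [abs_sub_comm, abs_sub_comm v']
    exact this hv' hv (by linarith)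
  have hd : 0 ≤ v' - v := sub_nonneg.mpr hle
  have := hstep ⌊v' - v⌋₊ v hv (v' - v) hd (Nat.lt_floor_add_one _).le
  rw [add_sub_cancel, ← abs_of_nonneg hd] at this
  exact this.trans (mul_le_mul_of_nonneg_left (by gcongr; exact Nat.floor_le (abs_nonneg _)) hε)

theorem exists_abs_sub_le_mul_abs_sub_add_one (hf : Continuous f)
    (h : ∀ w, Tendsto (fun v => f (v + w) - f v) atTop (𝓝 0)) {ε : ℝ} (hε : 0 < ε) :
    ∃ V, ∀ v ≥ V, ∀ v' ≥ V, |f v' - f v| ≤ ε * (|v' - v| + 1) := by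
  obtain ⟨V, hV⟩ := exists_forall_abs_sub_le_of_tendsto_sub hf h hε one_pos
  exact ⟨V, fun v hv v' hv' => abs_sub_le_mul_abs_sub_add_one hV hv hv'⟩

theorem tendsto_sub_of_eventually_abs_le {α : Type*} (hf : Continuous f)
    (h : ∀ w, Tendsto (fun v => f (v + w) - f v) atTop (𝓝 0)) {l : Filter α} {v w : α → ℝ}
    {W : ℝ} (hv : Tendsto v l atTop) (hw : ∀ᶠ u in l, |w u| ≤ W) :
    Tendsto (fun u => f (v u + w u) - f (v u)) l (𝓝 0) := by
  refine Metric.tendsto_nhds.mpr fun ε hε => ?_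
  obtain ⟨V, hV⟩ := exists_forall_abs_sub_le_of_tendsto_sub hf h (half_pos hε)
    (lt_max_of_lt_right one_pos : (0 : ℝ) < max W 1)
  filter_upwards [hw, hv.eventually_ge_atTop V] with u hwu hvu
  rw [Real.dist_0_eq_abs]
  exact (hV _ hvu _ (hwu.trans (le_max_left _ _))).trans_lt (half_lt_self hε)

end AdditiveSlowVariation

section RegularVariationAtZero

variable {σ : ℝ → ℝ} {lam : ℝ}

/-- Writing `σ x = x ^ lam * ℓ x`, this is `log (ℓ (exp (-v)))`; L1 says exactly that its
increments vanish at `∞`. -/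
noncomputable def logSlowPart (σ : ℝ → ℝ) (lam v : ℝ) : ℝ :=
  Real.log (σ (Real.exp (-v))) + lam * v

lemma continuous_logSlowPart (hσcont : ContinuousOn σ (Ici 0))
    (hσpos : ∀ t > (0:ℝ), 0 < σ t) : Continuous (logSlowPart σ lam) :=
  ((hσcont.comp_continuous (Real.continuous_exp.comp continuous_neg)
      fun _ => (Real.exp_pos _).le).log fun _ => (hσpos _ (Real.exp_pos _)).ne').add
    (continuous_const.mul continuous_id)

lemma logSlowPart_neg_log_add_sub (hσpos : ∀ t > (0:ℝ), 0 < σ t) {x c : ℝ}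
    (hx : 0 < x) (hc : 0 < c) :
    logSlowPart σ lam (-Real.log x + -Real.log c) - logSlowPart σ lam (-Real.log x) =
      Real.log (σ (x * c) / σ x) - lam * Real.log c := by
  have hxc := mul_pos hx hc
  rw [← neg_add, ← Real.log_mul hx.ne' hc.ne']
  simp only [logSlowPart, neg_neg, Real.exp_log hx, Real.exp_log hxc]
  rw [Real.log_div (hσpos _ hxc).ne' (hσpos _ hx).ne', Real.log_mul hx.ne' hc.ne']
  ring

lemma tendsto_logSlowPart_add_sub (hσpos : ∀ t > (0:ℝ), 0 < σ t)
    (hL1 : ∀ t > (0:ℝ), Tendsto (fun x => σ (t * x) / σ x) (𝓝[>] 0) (𝓝 (t ^ lam))) (w : ℝ) :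
    Tendsto (fun v => logSlowPart σ lam (v + w) - logSlowPart σ lam v) atTop (𝓝 0) := by
  have he : Tendsto (fun v : ℝ => Real.exp (-v)) atTop (𝓝[>] 0) :=
    tendsto_nhdsWithin_iff.mpr ⟨Real.tendsto_exp_atBot.comp tendsto_neg_atTop_atBot,
      Eventually.of_forall fun v => Real.exp_pos _⟩
  have hlim := (((Real.continuousAt_log (Real.rpow_pos_of_pos (Real.exp_pos (-w)) lam).ne'
    ).tendsto.comp ((hL1 _ (Real.exp_pos (-w))).comp he)).sub_const (lam * -w))
  rw [Real.log_rpow (Real.exp_pos _), Real.log_exp, sub_self] at hlim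
  refine hlim.congr fun v => ?_
  have := logSlowPart_neg_log_add_sub (lam := lam) hσpos (Real.exp_pos (-v)) (Real.exp_pos (-w))
  simp only [Real.log_exp, neg_neg, mul_comm (Real.exp (-v))] at this
  simp [this]

variable {α : Type*} {l : Filter α}

lemma tendsto_sigma_mul_div_of_pos (hσcont : ContinuousOn σ (Ici 0))
    (hσpos : ∀ t > (0:ℝ), 0 < σ t)
    (hL1 : ∀ t > (0:ℝ), Tendsto (fun x => σ (t * x) / σ x) (𝓝[>] 0) (𝓝 (t ^ lam)))
    {x c : α → ℝ} {C : ℝ} (hx : Tendsto x l (𝓝[>] 0)) (hc : Tendsto c l (𝓝 C)) (hC : 0 < C) :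
    Tendsto (fun u => σ (x u * c u) / σ (x u)) l (𝓝 (C ^ lam)) := by
  have hlogc := (Real.continuousAt_log hC.ne').tendsto.comp hc
  have hD := tendsto_sub_of_eventually_abs_le (continuous_logSlowPart hσcont hσpos)
    (tendsto_logSlowPart_add_sub hσpos hL1)
    (tendsto_neg_atBot_atTop.comp (Real.tendsto_log_nhdsGT_zero.comp hx))
    ((hlogc.neg.abs.eventually (gt_mem_nhds (lt_add_one _))).mono fun _ => le_of_lt)
  have hlim := Real.continuous_exp.continuousAt.tendsto.comp (hD.add (hlogc.const_mul lam))
  rw [zero_add, mul_comm, ← Real.rpow_def_of_pos hC] at hlim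
  refine hlim.congr' ?_
  filter_upwards [(tendsto_nhdsWithin_iff.mp hx).2, hc.eventually (eventually_gt_nhds hC)]
    with u hxu hcu
  simp only [Function.comp_apply]
  rw [logSlowPart_neg_log_add_sub hσpos hxu hcu, sub_add_cancel,
    Real.exp_log (div_pos (hσpos _ (mul_pos hxu hcu)) (hσpos _ hxu))]

lemma sigma_mul_div_le_of_le_one (hσpos : ∀ t > (0:ℝ), 0 < σ t) {V ε x c : ℝ}
    (hV : ∀ v ≥ V, ∀ v' ≥ V,
      |logSlowPart σ lam v' - logSlowPart σ lam v| ≤ ε * (|v' - v| + 1))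
    (hx : 0 < x) (hxV : V ≤ -Real.log x) (hc : 0 < c) (hc1 : c ≤ 1) :
    σ (x * c) / σ x ≤ Real.exp ε * c ^ (lam - ε) := by
  have hlogc : Real.log c ≤ 0 := Real.log_nonpos hc.le hc1
  have hinc := (abs_le.mp (hV _ hxV (-Real.log x + -Real.log c) (by linarith))).2
  rw [add_sub_cancel_left, abs_neg, abs_of_nonpos hlogc,
    logSlowPart_neg_log_add_sub hσpos hx hc] at hinc
  calc σ (x * c) / σ x = Real.exp (Real.log (σ (x * c) / σ x)) :=
        (Real.exp_log (div_pos (hσpos _ (mul_pos hx hc)) (hσpos _ hx))).symm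
    _ ≤ Real.exp (ε + Real.log c * (lam - ε)) := Real.exp_le_exp.mpr (by nlinarith)
    _ = Real.exp ε * c ^ (lam - ε) := by rw [Real.exp_add, Real.rpow_def_of_pos hc]

lemma tendsto_sigma_mul_div_of_tendsto_zero (hσcont : ContinuousOn σ (Ici 0)) (hσ0 : σ 0 = 0)
    (hσpos : ∀ t > (0:ℝ), 0 < σ t) (hlam : 0 < lam)
    (hL1 : ∀ t > (0:ℝ), Tendsto (fun x => σ (t * x) / σ x) (𝓝[>] 0) (𝓝 (t ^ lam)))
    {x c : α → ℝ} (hx : Tendsto x l (𝓝[>] 0)) (hc : Tendsto c l (𝓝 0))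
    (hc0 : ∀ᶠ u in l, 0 ≤ c u) :
    Tendsto (fun u => σ (x u * c u) / σ (x u)) l (𝓝 0) := by
  have hσnonneg : ∀ t ≥ 0, 0 ≤ σ t := fun t ht => ht.eq_or_lt.elim
    (fun h => h ▸ hσ0.ge) fun h => (hσpos t h).le
  obtain ⟨V, hV⟩ := exists_abs_sub_le_mul_abs_sub_add_one (continuous_logSlowPart hσcont hσpos)
    (tendsto_logSlowPart_add_sub hσpos hL1) (half_pos hlam)
  have hexp : 0 < lam - lam / 2 := by linarith
  have hbound : Tendsto (fun u => Real.exp (lam / 2) * c u ^ (lam - lam / 2)) l (𝓝 0) := by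
    simpa [Real.zero_rpow hexp.ne'] using
      (hc.rpow_const (p := lam - lam / 2) (Or.inr hexp.le)).const_mul (Real.exp (lam / 2))
  have hx0 := (tendsto_nhdsWithin_iff.mp hx).2
  refine tendsto_of_tendsto_of_tendsto_of_le_of_le' tendsto_const_nhds hbound ?_ ?_
  · filter_upwards [hx0, hc0] with u hxu hcu
    exact div_nonneg (hσnonneg _ (mul_nonneg hxu.le hcu)) (hσpos _ hxu).le
  · filter_upwards [hx0, hc0, hc.eventually (eventually_le_nhds one_pos),
      (tendsto_neg_atBot_atTop.comp (Real.tendsto_log_nhdsGT_zero.comp hx)).eventually_ge_atTop V]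
      with u hxu hcu hc1 hxV
    rcases hcu.eq_or_lt with hcu | hcu
    · rw [← hcu, mul_zero, hσ0, zero_div]
      exact mul_nonneg (Real.exp_pos _).le (Real.rpow_nonneg le_rfl _)
    · exact sigma_mul_div_le_of_le_one hσpos hV hxu hxV hcu hc1

theorem tendsto_sigma_mul_div [l.NeBot] (hσcont : ContinuousOn σ (Ici 0)) (hσ0 : σ 0 = 0)
    (hσpos : ∀ t > (0:ℝ), 0 < σ t) (hlam : 0 < lam)
    (hL1 : ∀ t > (0:ℝ), Tendsto (fun x => σ (t * x) / σ x) (𝓝[>] 0) (𝓝 (t ^ lam)))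
    {x c : α → ℝ} {C : ℝ} (hx : Tendsto x l (𝓝[>] 0)) (hc : Tendsto c l (𝓝 C))
    (hc0 : ∀ᶠ u in l, 0 ≤ c u) :
    Tendsto (fun u => σ (x u * c u) / σ (x u)) l (𝓝 (C ^ lam)) := by
  rcases (ge_of_tendsto hc hc0).eq_or_lt with hC | hC
  · rw [← hC, Real.zero_rpow hlam.ne']
    exact tendsto_sigma_mul_div_of_tendsto_zero hσcont hσ0 hσpos hlam hL1 hx (hC ▸ hc) hc0
  · exact tendsto_sigma_mul_div_of_pos hσcont hσpos hL1 hx hc hC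

/-- With `F = logSlowPart σ lam`, `v = -log a` and `w = -log (b / a)`, the hypothesis reads
`F (v + w) - F v = log ρ - (1 - lam) * w`: the Potter bound keeps `w` bounded, hence
`F (v + w) - F v → 0` and `w → log r / (1 - lam)`. -/
theorem tendsto_div_of_sigma_div_eq (hσcont : ContinuousOn σ (Ici 0))
    (hσpos : ∀ t > (0:ℝ), 0 < σ t) (hlam : lam < 1)
    (hL1 : ∀ t > (0:ℝ), Tendsto (fun x => σ (t * x) / σ x) (𝓝[>] 0) (𝓝 (t ^ lam)))
    {a b ρ : α → ℝ} {r : ℝ} (ha : Tendsto a l (𝓝[>] 0)) (hb : Tendsto b l (𝓝[>] 0))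
    (hρ : Tendsto ρ l (𝓝 r)) (hr : 0 < r)
    (hab : ∀ᶠ u in l, σ (b u) / σ (a u) = ρ u * (b u / a u)) :
    Tendsto (fun u => b u / a u) l (𝓝 (r ^ (-(1 - lam)⁻¹))) := by
  have hF := continuous_logSlowPart (lam := lam) hσcont hσpos
  have hF' := tendsto_logSlowPart_add_sub hσpos hL1
  have h1l : 0 < 1 - lam := sub_pos.mpr hlam
  set v := fun u => -Real.log (a u)
  set w := fun u => -Real.log (b u / a u)
  have ha0 := (tendsto_nhdsWithin_iff.mp ha).2
  have hb0 := (tendsto_nhdsWithin_iff.mp hb).2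
  have hv : Tendsto v l atTop := tendsto_neg_atBot_atTop.comp (Real.tendsto_log_nhdsGT_zero.comp ha)
  have hvw : Tendsto (fun u => v u + w u) l atTop := by
    refine (tendsto_neg_atBot_atTop.comp (Real.tendsto_log_nhdsGT_zero.comp hb)).congr' ?_
    filter_upwards [ha0, hb0] with u hau hbu
    simp only [v, w, Function.comp_apply]
    rw [Real.log_div hbu.ne' hau.ne']
    ring
  have hlogρ := (Real.continuousAt_log hr.ne').tendsto.comp hρ
  have hD : ∀ᶠ u in l, logSlowPart σ lam (v u + w u) - logSlowPart σ lam (v u) =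
      Real.log (ρ u) - (1 - lam) * w u := by
    filter_upwards [ha0, hb0, hab, hρ.eventually (eventually_gt_nhds hr)]
      with u hau hbu habu hρu
    simp only [v, w]
    rw [logSlowPart_neg_log_add_sub hσpos hau (div_pos hbu hau), mul_div_cancel₀ _ hau.ne',
      habu, Real.log_mul hρu.ne' (div_pos hbu hau).ne']
    ring
  obtain ⟨V, hV⟩ := exists_abs_sub_le_mul_abs_sub_add_one hF hF' (half_pos h1l)
  have hw : ∀ᶠ u in l, |w u| ≤ (2 * (|Real.log r| + 1) + (1 - lam)) / (1 - lam) := by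
    filter_upwards [hD, hlogρ.abs.eventually (gt_mem_nhds (lt_add_one _)),
      hv.eventually_ge_atTop V, hvw.eventually_ge_atTop V] with u hDu hρu hvu hvwu
    have hinc := hV _ hvu _ hvwu
    rw [add_sub_cancel_left, hDu] at hinc
    have htri := abs_sub_abs_le_abs_sub ((1 - lam) * w u) (Real.log (ρ u))
    rw [abs_mul, abs_of_pos h1l, abs_sub_comm] at htri
    rw [le_div_iff₀ h1l]
    simp only [Function.comp_apply] at hρu
    nlinarith
  have hwlim : Tendsto w l (𝓝 (Real.log r / (1 - lam))) := by
    have := (hlogρ.sub (tendsto_sub_of_eventually_abs_le hF hF' hv hw)).div_const (1 - lam)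
    rw [sub_zero] at this
    refine this.congr' ?_
    filter_upwards [hD] with u hDu
    simp only [Function.comp_apply, hDu]
    field_simp
    ring
  have hlim := Real.continuous_exp.continuousAt.tendsto.comp hwlim.neg
  rw [div_eq_mul_inv, ← mul_neg, ← Real.rpow_def_of_pos hr] at hlim
  refine hlim.congr' ?_
  filter_upwards [ha0, hb0] with u hau hbu
  simp only [w, Function.comp_apply, neg_neg, Real.exp_log (div_pos hbu hau)]

end RegularVariationAtZero

lemma rpow_sq_eq_rpow_two_mul {x : ℝ} (hx : 0 ≤ x) (y : ℝ) : (x ^ y) ^ 2 = x ^ (2 * y) := by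
  rw [← Real.rpow_mul_natCast hx, mul_comm]
  norm_num

lemma covariance_div_eq (σ : ℝ → ℝ) {a b : ℝ} (t s : ℝ) (ha : 0 < a) (hσa : 0 < σ a) :
    (σ (a * |t|) ^ 2 + σ (b * |s|) ^ 2 - σ |a * t - b * s| ^ 2) / (2 * σ a * σ b) =
      ((σ (a * |t|) / σ a) ^ 2 + (σ (a * (b / a * |s|)) / σ a) ^ 2
        - (σ (a * |t - b / a * s|) / σ a) ^ 2) / (2 * (σ (a * (b / a)) / σ a)) := by
  have hab : a * |t - b / a * s| = |a * t - b * s| := by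
    rw [← abs_of_pos ha, ← abs_mul, abs_of_pos ha, mul_sub, ← mul_assoc, mul_div_cancel₀ _ ha.ne']
  rw [hab, ← mul_assoc, mul_div_cancel₀ _ ha.ne']
  field_simp

theorem cov_limit_positive_ratio_general
    (σ : ℝ → ℝ) (hσcont : ContinuousOn σ (Set.Ici 0)) (hσ0 : σ 0 = 0)
    (hσpos : ∀ t > (0:ℝ), 0 < σ t)
    -- assumption L1
    (lam : ℝ) (hlam : lam ∈ Set.Ioo (0:ℝ) 1)
    (hL1 : ∀ t > (0:ℝ), Tendsto (fun x => σ (t * x) / σ x) (𝓝[>] 0) (𝓝 (t ^ lam)))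
    -- δ : regularly varying at ∞ with index −κ, solving x δ(x) = σ(δ(x)), δ → 0
    (x₀ : ℝ) (δ : ℝ → ℝ)
    (hδpos : ∀ x > x₀, 0 < δ x)
    (hδeq : ∀ x > x₀, x * δ x = σ (δ x))
    (hδ0 : Tendsto δ atTop (𝓝 0))
    -- rates
    (ri rj : ℝ → ℝ)
    (hri : Tendsto ri atTop atTop) (hrj : Tendsto rj atTop atTop)
    (𝔯 : ℝ) (h𝔯 : 𝔯 ∈ Set.Ioc (0:ℝ) 1)
    (hratio : Tendsto (fun u => rj u / ri u) atTop (𝓝 𝔯)) :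
    ∀ t s : ℝ, t ≠ 0 → s ≠ 0 →
      Tendsto (fun u =>
          (σ (δ (ri u) * |t|) ^ 2 + σ (δ (rj u) * |s|) ^ 2
              - σ (|δ (ri u) * t - δ (rj u) * s|) ^ 2)
            / (2 * σ (δ (ri u)) * σ (δ (rj u)))) atTop
        (𝓝 ((|t| ^ (2 * lam) + |𝔯 ^ (-(1 - lam)⁻¹) * s| ^ (2 * lam)
              - |t - 𝔯 ^ (-(1 - lam)⁻¹) * s| ^ (2 * lam))
            / (2 * 𝔯 ^ (-((1 - lam)⁻¹ * lam))))) := by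
  intro t s _ _
  have hδ : Tendsto δ atTop (𝓝[>] 0) :=
    tendsto_nhdsWithin_iff.mpr ⟨hδ0, (eventually_gt_atTop x₀).mono hδpos⟩
  have ha := hδ.comp hri
  have hb := hδ.comp hrj
  set M := 𝔯 ^ (-(1 - lam)⁻¹)
  have hM : 0 < M := Real.rpow_pos_of_pos h𝔯.1 _
  have hm : Tendsto (fun u => δ (rj u) / δ (ri u)) atTop (𝓝 M) := by
    refine tendsto_div_of_sigma_div_eq hσcont hσpos hlam.2 hL1 ha hb hratio h𝔯.1 ?_
    filter_upwards [hri.eventually_gt_atTop x₀, hrj.eventually_gt_atTop x₀] with u hi hj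
    rw [← hδeq _ hi, ← hδeq _ hj, div_mul_div_comm]
  have hm0 : ∀ᶠ u in atTop, 0 ≤ δ (rj u) / δ (ri u) :=
    (hm.eventually (eventually_gt_nhds hM)).mono fun _ => le_of_lt
  have hlim {c : ℝ → ℝ} {C : ℝ} (hc : Tendsto c atTop (𝓝 C)) (hc0 : ∀ᶠ u in atTop, 0 ≤ c u) :=
    tendsto_sigma_mul_div hσcont hσ0 hσpos hlam.1 hL1 ha hc hc0
  have hT := hlim (tendsto_const_nhds (x := |t|)) (.of_forall fun _ => abs_nonneg t)
  have hS := hlim (hm.mul_const |s|) (hm0.mono fun _ h => mul_nonneg h (abs_nonneg s))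
  have hTS := hlim ((tendsto_const_nhds (x := t)).sub (hm.mul_const s)).abs
    (.of_forall fun _ => abs_nonneg _)
  have hcov := (((hT.pow 2).add (hS.pow 2)).sub (hTS.pow 2)).div ((hlim hm hm0).const_mul 2)
    (by positivity)
  rw [← neg_mul, Real.rpow_mul h𝔯.1.le, abs_mul, abs_of_pos hM]
  rw [rpow_sq_eq_rpow_two_mul (abs_nonneg _), rpow_sq_eq_rpow_two_mul (by positivity),
    rpow_sq_eq_rpow_two_mul (abs_nonneg _)] at hcov
  refine hcov.congr' ?_
  filter_upwards [(tendsto_nhdsWithin_iff.mp ha).2, (tendsto_nhdsWithin_iff.mp hb).2]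
    with u hau hbu
  exact (covariance_div_eq σ t s hau (hσpos _ hau)).symm

/-- **Covariance limit in the light-traffic regime, positive rate-ratio case.** Under
L1, with `δ` regularly varying at `∞` with index `−κ` (`κ = (1−λ)⁻¹`) solving
`x δ(x) = σ(δ(x))` and `δ(x) → 0`, and rates `r_i, r_j → ∞` with
`r_j/r_i → 𝔯 ∈ (0,1]`, the normalized covariance converges to the fBm-type covariance. -/
theorem cov_limit_positive_ratio
    (σ : ℝ → ℝ) (hσcont : ContinuousOn σ (Set.Ici 0)) (hσ0 : σ 0 = 0)
    (hσpos : ∀ t > (0:ℝ), 0 < σ t)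
    -- assumption L1
    (lam : ℝ) (hlam : lam ∈ Set.Ioo (0:ℝ) 1)
    (hL1 : ∀ t > (0:ℝ), Tendsto (fun x => σ (t * x) / σ x) (𝓝[>] 0) (𝓝 (t ^ lam)))
    -- δ : regularly varying at ∞ with index −κ, solving x δ(x) = σ(δ(x)), δ → 0
    (x₀ : ℝ) (δ : ℝ → ℝ)
    (hδpos : ∀ x > x₀, 0 < δ x)
    (hδRV : ∀ t > (0:ℝ),
      Tendsto (fun x => δ (t * x) / δ x) atTop (𝓝 (t ^ (-(1 - lam)⁻¹))))
    (hδeq : ∀ x > x₀, x * δ x = σ (δ x))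
    (hδ0 : Tendsto δ atTop (𝓝 0))
    -- rates
    (ri rj : ℝ → ℝ)
    (hri : Tendsto ri atTop atTop) (hrj : Tendsto rj atTop atTop)
    (𝔯 : ℝ) (h𝔯 : 𝔯 ∈ Set.Ioc (0:ℝ) 1)
    (hratio : Tendsto (fun u => rj u / ri u) atTop (𝓝 𝔯)) :
    ∀ t s : ℝ, t ≠ 0 → s ≠ 0 →
      Tendsto (fun u =>
          (σ (δ (ri u) * |t|) ^ 2 + σ (δ (rj u) * |s|) ^ 2
              - σ (|δ (ri u) * t - δ (rj u) * s|) ^ 2)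
            / (2 * σ (δ (ri u)) * σ (δ (rj u)))) atTop
        (𝓝 ((|t| ^ (2 * lam) + |𝔯 ^ (-(1 - lam)⁻¹) * s| ^ (2 * lam)
              - |t - 𝔯 ^ (-(1 - lam)⁻¹) * s| ^ (2 * lam))
            / (2 * 𝔯 ^ (-((1 - lam)⁻¹ * lam))))) :=
  cov_limit_positive_ratio_general σ hσcont hσ0 hσpos lam hlam hL1 x₀ δ hδpos hδeq hδ0 ri rj hri hrj
    𝔯 h𝔯 hratio
end

section
/- Pathwise oscillation bound for the reflection (supremum) map. Let c > 0 and let f : ℝ → ℝ be continuous such that X̄(t) := sup_{−∞<s<t} ( f(t) − f(s) − c(t − s) ) is finite for every t ∈ ℝ. Then for all s ≤ t: | X̄(t) − X̄(s) | ≤ 2 · sup_{ s ≤ v ≤ w ≤ t } | f(w) − f(v) − c(w − v) |. -/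
open Filter Topology

/-!
Write `g x = f x - c x`, so that `X̄ t = sup_{v < t} (g t - g v)`. For `s ≤ t`, every `v < t` either
lies below `s`, and then `g t - g v = (g s - g v) + (g t - g s) ≤ X̄ s + M`, or lies in `[s, t)`, and
then `g t - g v ≤ M ≤ X̄ s + M` because `X̄ s ≥ 0` by continuity; here `M` bounds the increments of
`g` inside `[s, t]`. Symmetrically `X̄ s ≤ X̄ t + M`, so even `|X̄ t - X̄ s| ≤ M`.
-/

-- Junk value `0` when the supremum is infinite, hence the `BddAbove` hypotheses below.
noncomputable def reflectionMap (g : ℝ → ℝ) (t : ℝ) : ℝ :=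
  ⨆ v : Set.Iio t, (g t - g v)

noncomputable def intervalOscillation (g : ℝ → ℝ) (s t : ℝ) : ℝ :=
  ⨆ p : {p : ℝ × ℝ // s ≤ p.1 ∧ p.1 ≤ p.2 ∧ p.2 ≤ t}, |g p.1.2 - g p.1.1|

section reflectionMap

variable {g : ℝ → ℝ} {s t : ℝ}

theorem sub_le_reflectionMap (hg : BddAbove (Set.range fun v : Set.Iio t ↦ g t - g v))
    {v : ℝ} (hv : v < t) : g t - g v ≤ reflectionMap g t :=
  le_ciSup hg ⟨v, hv⟩

theorem reflectionMap_nonneg (hg : BddAbove (Set.range fun v : Set.Iio t ↦ g t - g v))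
    (hgt : ContinuousWithinAt g (Set.Iio t) t) : 0 ≤ reflectionMap g t := by
  have hlim : Tendsto (fun v ↦ g t - g v) (𝓝[<] t) (𝓝 0) := by
    simpa using (tendsto_const_nhds (x := g t)).sub hgt
  exact le_of_tendsto hlim <| eventually_nhdsWithin_of_forall fun _ hv ↦ sub_le_reflectionMap hg hv

theorem reflectionMap_le_add (hs : BddAbove (Set.range fun v : Set.Iio s ↦ g s - g v))
    (hs₀ : 0 ≤ reflectionMap g s) (hst : s ≤ t) {M : ℝ} (hM : ∀ v, s ≤ v → v ≤ t → g t - g v ≤ M) :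
    reflectionMap g t ≤ reflectionMap g s + M := by
  have : Nonempty (Set.Iio t) := ⟨⟨t - 1, by simp⟩⟩
  refine ciSup_le fun ⟨v, hv⟩ ↦ ?_
  rcases lt_or_ge v s with hvs | hsv
  · calc g t - g v = (g s - g v) + (g t - g s) := by ring
      _ ≤ reflectionMap g s + M := add_le_add (sub_le_reflectionMap hs hvs) (hM s le_rfl hst)
  · linarith [hM v hsv hv.le]

theorem reflectionMap_le_add_of_le (ht : BddAbove (Set.range fun v : Set.Iio t ↦ g t - g v))
    (hst : s ≤ t) {M : ℝ} (hM : g s - g t ≤ M) : reflectionMap g s ≤ reflectionMap g t + M := by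
  have : Nonempty (Set.Iio s) := ⟨⟨s - 1, by simp⟩⟩
  refine ciSup_le fun ⟨v, hv⟩ ↦ ?_
  calc g s - g v = (g t - g v) + (g s - g t) := by ring
    _ ≤ reflectionMap g t + M := add_le_add (sub_le_reflectionMap ht (hv.trans_le hst)) hM

theorem abs_reflectionMap_sub_le (hs : BddAbove (Set.range fun v : Set.Iio s ↦ g s - g v))
    (ht : BddAbove (Set.range fun v : Set.Iio t ↦ g t - g v)) (hs₀ : 0 ≤ reflectionMap g s)
    (hst : s ≤ t) {M : ℝ} (hM : ∀ v w, s ≤ v → v ≤ w → w ≤ t → |g w - g v| ≤ M) :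
    |reflectionMap g t - reflectionMap g s| ≤ M := by
  have hup := reflectionMap_le_add hs hs₀ hst fun v hsv hvt ↦
    (le_abs_self _).trans (hM v t hsv hvt le_rfl)
  have hdown := reflectionMap_le_add_of_le ht hst (M := M) <| by
    linarith [neg_le_abs (g t - g s), hM s t le_rfl hst le_rfl]
  exact abs_le.mpr ⟨by linarith, by linarith⟩

end reflectionMap

section intervalOscillation

variable {g : ℝ → ℝ} {s t : ℝ}

theorem bddAbove_intervalOscillation (hg : ContinuousOn g (Set.Icc s t)) :
    BddAbove (Set.range fun p : {p : ℝ × ℝ // s ≤ p.1 ∧ p.1 ≤ p.2 ∧ p.2 ≤ t} ↦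
      |g p.1.2 - g p.1.1|) := by
  obtain ⟨C, hC⟩ := isCompact_Icc.exists_bound_of_continuousOn hg
  refine ⟨C + C, ?_⟩
  rintro _ ⟨⟨⟨v, w⟩, hsv, hvw, hwt⟩, rfl⟩
  exact (abs_sub _ _).trans <| add_le_add (hC w ⟨hsv.trans hvw, hwt⟩) (hC v ⟨hsv, hvw.trans hwt⟩)

theorem abs_sub_le_intervalOscillation (hg : ContinuousOn g (Set.Icc s t)) {v w : ℝ}
    (hsv : s ≤ v) (hvw : v ≤ w) (hwt : w ≤ t) : |g w - g v| ≤ intervalOscillation g s t :=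
  le_ciSup (bddAbove_intervalOscillation hg) ⟨(v, w), hsv, hvw, hwt⟩

theorem intervalOscillation_nonneg (hg : ContinuousOn g (Set.Icc s t)) (hst : s ≤ t) :
    0 ≤ intervalOscillation g s t :=
  (abs_nonneg _).trans (abs_sub_le_intervalOscillation hg le_rfl le_rfl hst (w := s))

end intervalOscillation

theorem reflection_oscillation_bound_general
    (c : ℝ) (f : ℝ → ℝ) (hf : Continuous f)
    (hbdd : ∀ t : ℝ,
      BddAbove (Set.range fun s : Set.Iio t => f t - f ↑s - c * (t - ↑s))) :
    ∀ s t : ℝ, s ≤ t →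
      |(⨆ v : Set.Iio t, (f t - f ↑v - c * (t - ↑v)))
          - ⨆ v : Set.Iio s, (f s - f ↑v - c * (s - ↑v))|
        ≤ 2 * ⨆ p : {p : ℝ × ℝ // s ≤ p.1 ∧ p.1 ≤ p.2 ∧ p.2 ≤ t},
            |f p.1.2 - f p.1.1 - c * (p.1.2 - p.1.1)| := by
  intro s t hst
  set g : ℝ → ℝ := fun x ↦ f x - c * x
  have hg : Continuous g := by fun_prop
  have hX (r : ℝ) : reflectionMap g r = ⨆ v : Set.Iio r, (f r - f ↑v - c * (r - ↑v)) :=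
    iSup_congr fun _ ↦ by ring
  have hO : intervalOscillation g s t = ⨆ p : {p : ℝ × ℝ // s ≤ p.1 ∧ p.1 ≤ p.2 ∧ p.2 ≤ t},
      |f p.1.2 - f p.1.1 - c * (p.1.2 - p.1.1)| :=
    iSup_congr fun _ ↦ congrArg abs (by ring)
  have hB (r : ℝ) : BddAbove (Set.range fun v : Set.Iio r ↦ g r - g v) := by
    convert hbdd r using 3 with v
    ring
  rw [← hX, ← hX, ← hO]
  have hM := abs_reflectionMap_sub_le (hB s) (hB t)
    (reflectionMap_nonneg (hB s) hg.continuousWithinAt) hst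
    fun _ _ ↦ abs_sub_le_intervalOscillation hg.continuousOn
  linarith [intervalOscillation_nonneg hg.continuousOn hst]

/-- **Pathwise oscillation bound for the reflection (supremum) map.** Let `c > 0` and
let `f : ℝ → ℝ` be continuous such that `X̄(t) = sup_{−∞<s<t} (f(t) − f(s) − c(t−s))`
is finite (the defining set is bounded above) for every `t`. Then for all `s ≤ t`:
`|X̄(t) − X̄(s)| ≤ 2 sup_{s ≤ v ≤ w ≤ t} |f(w) − f(v) − c(w−v)|`. -/
theorem reflection_oscillation_bound
    (c : ℝ) (hc : 0 < c) (f : ℝ → ℝ) (hf : Continuous f)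
    (hbdd : ∀ t : ℝ,
      BddAbove (Set.range fun s : Set.Iio t => f t - f ↑s - c * (t - ↑s))) :
    ∀ s t : ℝ, s ≤ t →
      |(⨆ v : Set.Iio t, (f t - f ↑v - c * (t - ↑v)))
          - ⨆ v : Set.Iio s, (f s - f ↑v - c * (s - ↑v))|
        ≤ 2 * ⨆ p : {p : ℝ × ℝ // s ≤ p.1 ∧ p.1 ≤ p.2 ∧ p.2 ≤ t},
            |f p.1.2 - f p.1.1 - c * (p.1.2 - p.1.1)| :=
  reflection_oscillation_bound_general c f hf hbdd
end
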